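/- arXiv:1310.1351 — 9 statements merged into one kernel-verified Lean document; each statement's English description precedes it below -/
import Mathlib

section
/- For natural numbers k ≥ 1, m, n with m ≥ 2k and n ≥ 2k, for Lebesgue-almost every matrix A ∈ ℝ^{m×n} the following holds: for all vectors x, z ∈ ℝ^n each having at most k nonzero entries, if |Ax| = |Az| entrywise, then z = x or z = -x. (Equivalently, the set of matrices A ∈ ℝ^{m×n} for which this recovery property fails has Lebesgue measure zero.) -/
/-!
If `|Ax| = |Az|` with `z ≠ ± x`, then `u = x + z` and `v = x - z` are nonzero and every row of
`A` annihilates `u` or `v`, since `(Ax)ᵢ² - (Az)ᵢ² = (Au)ᵢ (Av)ᵢ`. Up to scaling, the pair `(x, z)`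
has at most `2k - 1` free coordinates, fewer than the `m ≥ 2k` rows. Store these coordinates in
one "slot" entry per row of a matrix `B`, and let `B ↦ A` solve each row equation for its slot
entry. This map is differentiable where the slot coefficients do not vanish, its image contains
every bad `A`, and it ignores one slot entry of `B`, so its image is the differentiable image of
a hyperplane and is Lebesgue-null. Only finitely many combinatorial choices (supports, slots,
which rows annihilate `u`) are involved.
-/

open MeasureTheory Finset

theorem addHaar_image_eq_zero_of_subset_image_submodule {E : Type*} [NormedAddCommGroup E]
    [NormedSpace ℝ E] [FiniteDimensional ℝ E] [MeasurableSpace E] [BorelSpace E]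
    (μ : Measure E) [μ.IsAddHaarMeasure] {f : E → E} {s : Set E} (H : Submodule ℝ E)
    (hH : H ≠ ⊤) (hf : DifferentiableOn ℝ f s) (hfH : f '' s ⊆ f '' (s ∩ H)) :
    μ (f '' s) = 0 :=
  measure_mono_null hfH <| addHaar_image_eq_zero_of_differentiableOn_of_addHaar_eq_zero μ
    (hf.mono Set.inter_subset_left)
    (measure_mono_null Set.inter_subset_right (Measure.addHaar_submodule μ H hH))

theorem card_filter_sumElim_ne_zero {κ M : Type*} [Fintype κ] [Zero M] [DecidableEq M]
    (x z : κ → M) :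
    #{a | Sum.elim x z a ≠ 0} = (Function.support x).ncard + (Function.support z).ncard := by
  have hcard : ∀ y : κ → M, (Function.support y).ncard = #{j | y j ≠ 0} := fun y => by
    rw [← Set.ncard_coe_finset]; congr; ext; simp
  rw [hcard, hcard, ← card_disjSum]
  congr 1
  ext (a | a) <;> simp

theorem Finset.exists_injOn_of_card_le {α β : Type*} [Fintype β] {s : Finset α}
    (hs : s.Nonempty) (h : #s ≤ Fintype.card β) : ∃ f : α → β, Set.InjOn f s := by
  obtain ⟨e⟩ := Function.Embedding.nonempty_of_card_le (α := s) (β := β) (by simpa using h)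
  have : Nonempty β := ⟨e ⟨_, hs.choose_spec⟩⟩
  exact Set.exists_injOn_iff_injective.2 ⟨e, e.injective⟩

theorem dotProduct_sub_eq_zero_of_abs_eq {κ R : Type*} [Fintype κ] [NonUnitalNonAssocRing R]
    [LinearOrder R] [AddLeftMono R] {a x z : κ → R} (habs : |a ⬝ᵥ x| = |a ⬝ᵥ z|)
    (hadd : a ⬝ᵥ (x + z) ≠ 0) :
    a ⬝ᵥ (x - z) = 0 := by
  rw [dotProduct_sub, sub_eq_zero]
  refine (abs_eq_abs.1 habs).resolve_right fun h => hadd ?_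
  rw [dotProduct_add, h, neg_add_cancel]

section SolveRows

variable {ι κ : Type*} [Fintype κ] [DecidableEq κ]

noncomputable def solveRows (c : ι → κ → ℝ) (σ : ι → κ) (B : ι → κ → ℝ) : ι → κ → ℝ :=
  fun i j => if j = σ i then -(∑ j' ∈ univ.erase (σ i), B i j' * c i j') / c i (σ i) else B i j

theorem solveRows_eq_of_dotProduct_eq_zero {c : ι → κ → ℝ} {σ : ι → κ} {A B : ι → κ → ℝ}
    (hc : ∀ i, c i (σ i) ≠ 0) (hA : ∀ i, A i ⬝ᵥ c i = 0)
    (hB : ∀ i j, j ≠ σ i → B i j = A i j) : solveRows c σ B = A := by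
  funext i j
  unfold solveRows
  split_ifs with hj
  · subst hj
    have hsum := add_sum_erase univ (fun j' => A i j' * c i j') (mem_univ (σ i))
    rw [← dotProduct, hA i] at hsum
    rw [sum_congr rfl fun j' hj' => by rw [hB i j' (ne_of_mem_erase hj')]]
    field_simp [hc i]
    linarith
  · exact hB i j hj

theorem solveRows_congr {c : ι → κ → ℝ} {σ : ι → κ} {B B' : ι → κ → ℝ}
    (h : ∀ i j, j ≠ σ i → B i j = B' i j) : solveRows c σ B = solveRows c σ B' := by
  funext i j
  unfold solveRows
  split_ifs with hj
  · rw [sum_congr rfl fun j' hj' => by rw [h i j' (ne_of_mem_erase hj')]]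
  · exact h i j hj

theorem differentiableAt_solveRows [Fintype ι] {E : Type*} [NormedAddCommGroup E]
    [NormedSpace ℝ E] {c : E → ι → κ → ℝ} {σ : ι → κ} {B : E → ι → κ → ℝ} {x : E}
    (hc : DifferentiableAt ℝ c x) (hB : DifferentiableAt ℝ B x) (hσ : ∀ i, c x i (σ i) ≠ 0) :
    DifferentiableAt ℝ (fun y => solveRows (c y) σ (B y)) x := by
  have hc' : ∀ i j, DifferentiableAt ℝ (fun y => c y i j) x := fun i j =>
    differentiableAt_pi.1 (differentiableAt_pi.1 hc i) j
  have hB' : ∀ i j, DifferentiableAt ℝ (fun y => B y i j) x := fun i j =>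
    differentiableAt_pi.1 (differentiableAt_pi.1 hB i) j
  refine differentiableAt_pi.2 fun i => differentiableAt_pi.2 fun j => ?_
  unfold solveRows
  split_ifs
  · simp only [div_eq_mul_inv]
    exact (DifferentiableAt.fun_sum fun j' _ => (hB' i j').mul (hc' i j')).neg.mul
      ((hc' i (σ i)).fun_inv (hσ i))
  · exact hB' i j

end SolveRows

/-- The pair `(x, z)` is packed as `Sum.elim x z : κ ⊕ κ → ℝ`. Its coordinate `a ∈ support` is
stored in entry `(row a, slot (row a))` of a matrix, except for `base`, normalized to `1`. Rows in
`I` are to annihilate `x + z`, the others `x - z`. -/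
structure PairEncoding (ι κ : Type*) where
  support : Finset (κ ⊕ κ)
  row : κ ⊕ κ → ι
  base : κ ⊕ κ
  I : Finset ι
  slot : ι → κ

namespace PairEncoding

variable {ι κ : Type*}

instance [Finite ι] [Finite κ] : Finite (PairEncoding ι κ) :=
  Finite.of_injective (fun p : PairEncoding ι κ => (p.support, p.row, p.base, p.I, p.slot))
    fun p q h => by cases p; cases q; simp_all

variable [DecidableEq κ] (p : PairEncoding ι κ)

def IsValid : Prop := p.base ∈ p.support ∧ Set.InjOn p.row p.support

def decode (B : ι → κ → ℝ) (a : κ ⊕ κ) : ℝ :=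
  if a = p.base then 1 else if a ∈ p.support then B (p.row a) (p.slot (p.row a)) else 0

theorem exists_decode_eq_smul (hinj : Set.InjOn p.row p.support) {w : κ ⊕ κ → ℝ}
    (hw : ∀ a ∉ p.support, w a = 0) (hbase : w p.base ≠ 0) (A : ι → κ → ℝ) :
    ∃ B, p.decode B = (w p.base)⁻¹ • w ∧ ∀ i j, j ≠ p.slot i → B i j = A i j := by
  have : Nonempty (κ ⊕ κ) := ⟨p.base⟩
  refine ⟨fun i j => if j = p.slot i then (w p.base)⁻¹ * w (Function.invFunOn p.row p.support i)
    else A i j, funext fun a => ?_, fun i j hj => if_neg hj⟩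
  simp only [decode, Pi.smul_apply, smul_eq_mul]
  split_ifs with ha hmem
  · subst ha; exact (inv_mul_cancel₀ hbase).symm
  · simp [hinj.leftInvOn_invFunOn (mem_coe.2 hmem)]
  · rw [hw a hmem, mul_zero]

variable [DecidableEq ι]

def coeff (B : ι → κ → ℝ) (i : ι) : κ → ℝ :=
  if i ∈ p.I then p.decode B ∘ .inl + p.decode B ∘ .inr else p.decode B ∘ .inl - p.decode B ∘ .inr

def domain : Set (ι → κ → ℝ) := {B | ∀ i, p.coeff B i (p.slot i) ≠ 0}

theorem coeff_of_decode_eq_smul {B : ι → κ → ℝ} {c : ℝ} {x z : κ → ℝ}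
    (h : p.decode B = c • Sum.elim x z) (i : ι) :
    p.coeff B i = if i ∈ p.I then c • (x + z) else c • (x - z) := by
  simp only [coeff, h]
  split_ifs <;> ext j <;> simp [mul_add, mul_sub]

variable [Fintype ι] [Fintype κ]

noncomputable def toMatrix (B : ι → κ → ℝ) : ι → κ → ℝ := solveRows (p.coeff B) p.slot B

theorem differentiable_coeff : Differentiable ℝ p.coeff := by
  have hdecode : Differentiable ℝ p.decode := by
    refine differentiable_pi.2 fun a => ?_
    unfold decode
    split_ifs <;> fun_prop
  refine differentiable_pi.2 fun i => ?_
  unfold coeff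
  split_ifs <;> fun_prop

theorem differentiableOn_toMatrix : DifferentiableOn ℝ p.toMatrix p.domain := fun _ hB =>
  (differentiableAt_solveRows p.differentiable_coeff.differentiableAt differentiableAt_id
    hB).differentiableWithinAt

theorem volume_image_toMatrix_eq_zero (hp : p.IsValid) :
    volume (p.toMatrix '' p.domain) = 0 := by
  set i₀ := p.row p.base
  set j₀ := p.slot i₀
  let H : Submodule ℝ (ι → κ → ℝ) :=
    LinearMap.ker ((LinearMap.proj j₀).comp (LinearMap.proj (R := ℝ) (φ := fun _ : ι => κ → ℝ) i₀))
  have hH : H ≠ ⊤ := by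
    intro h
    have : (fun _ _ => (1 : ℝ)) ∈ H := h ▸ Submodule.mem_top
    simp [H] at this
  refine addHaar_image_eq_zero_of_subset_image_submodule volume H hH p.differentiableOn_toMatrix ?_
  rintro _ ⟨B, hB, rfl⟩
  set B' := Function.update B i₀ (Function.update (B i₀) j₀ 0)
  have hB'B : ∀ i j, (i, j) ≠ (i₀, j₀) → B' i j = B i j := by
    intro i j hij
    by_cases hi : i = i₀
    · subst hi; simp_all [B']
    · simp [B', hi]
  -- by injectivity of `row`, decoding never reads the entry `(i₀, j₀)`
  have hdecode : p.decode B' = p.decode B := by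
    funext a
    unfold decode
    split_ifs with ha hmem
    · rfl
    · exact hB'B _ _ fun h => ha (hp.2 hmem hp.1 (Prod.ext_iff.1 h).1)
    · rfl
  have hcoeff : p.coeff B' = p.coeff B := by unfold coeff; rw [hdecode]
  refine ⟨B', ⟨fun i => hcoeff ▸ hB i, LinearMap.mem_ker.2 (by simp [B'])⟩, ?_⟩
  simp only [toMatrix, hcoeff]
  exact solveRows_congr fun i j hj => hB'B i j fun h => by
    simp only [Prod.ext_iff] at h; exact hj (h.2.trans (congrArg p.slot h.1).symm)

theorem exists_mem_image_toMatrix {k : ℕ} (hk : 2 * k ≤ Fintype.card ι) {A : ι → κ → ℝ}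
    {x z : κ → ℝ} (hx : (Function.support x).ncard ≤ k) (hz : (Function.support z).ncard ≤ k)
    (habs : ∀ i, |A i ⬝ᵥ x| = |A i ⬝ᵥ z|) (hzx : z ≠ x) (hzx' : z ≠ -x) :
    ∃ p : PairEncoding ι κ, p.IsValid ∧ A ∈ p.toMatrix '' p.domain := by
  classical
  set W : Finset (κ ⊕ κ) := {a | Sum.elim x z a ≠ 0}
  obtain ⟨base, hbase⟩ : W.Nonempty := by
    by_contra! hW
    refine hzx (funext fun j => ?_)
    have hx0 := eq_empty_iff_forall_notMem.1 hW (.inl j)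
    have hz0 := eq_empty_iff_forall_notMem.1 hW (.inr j)
    simp_all [W]
  obtain ⟨row, hrow⟩ := W.exists_injOn_of_card_le (β := ι) ⟨base, hbase⟩ <| by
    have hW : #W = _ := card_filter_sumElim_ne_zero x z
    omega
  obtain ⟨j₀, hj₀⟩ : ∃ j, x j + z j ≠ 0 := by
    by_contra! h
    exact hzx' (funext fun j => eq_neg_of_add_eq_zero_right (h j))
  obtain ⟨j₁, hj₁⟩ : ∃ j, x j - z j ≠ 0 := by
    by_contra! h
    exact hzx (funext fun j => (sub_eq_zero.1 (h j)).symm)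
  let I : Finset ι := {i | A i ⬝ᵥ (x + z) = 0}
  let p : PairEncoding ι κ := ⟨W, row, base, I, fun i => if i ∈ I then j₀ else j₁⟩
  have hwbase : Sum.elim x z base ≠ 0 := by simpa [W] using hbase
  obtain ⟨B, hdecode, hBA⟩ := p.exists_decode_eq_smul hrow
    (fun a ha => by simpa [p, W] using ha) hwbase A
  have hcoeff := p.coeff_of_decode_eq_smul hdecode
  have hslot : ∀ i, p.coeff B i (p.slot i) ≠ 0 := fun i => by
    rw [hcoeff]
    split_ifs with hi <;> simp [p, hi, hwbase, hj₀, hj₁]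
  refine ⟨p, ⟨hbase, hrow⟩, B, hslot, solveRows_eq_of_dotProduct_eq_zero hslot (fun i => ?_) hBA⟩
  rw [hcoeff]
  split_ifs with hi
  · rw [dotProduct_smul, (mem_filter.1 hi).2, smul_zero]
  · rw [dotProduct_smul, dotProduct_sub_eq_zero_of_abs_eq (habs i) (by simpa [p, I] using hi),
      smul_zero]

end PairEncoding

theorem ae_forall_eq_or_eq_neg_of_abs_dotProduct_eq {ι κ : Type*} [Fintype ι] [Fintype κ]
    {k : ℕ} (hk : 2 * k ≤ Fintype.card ι) :
    ∀ᵐ A : ι → κ → ℝ, ∀ x z : κ → ℝ,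
      (Function.support x).ncard ≤ k → (Function.support z).ncard ≤ k →
      (∀ i, |A i ⬝ᵥ x| = |A i ⬝ᵥ z|) → z = x ∨ z = -x := by
  classical
  rw [ae_iff]
  refine measure_mono_null
    (t := ⋃ p : {p : PairEncoding ι κ // p.IsValid}, p.1.toMatrix '' p.1.domain)
    ?_ (measure_iUnion_null fun p => p.1.volume_image_toMatrix_eq_zero p.2)
  intro A hA
  simp only [Set.mem_ofPred_eq, not_forall, not_or] at hA
  obtain ⟨x, z, hx, hz, habs, hzx, hzx'⟩ := hA
  obtain ⟨p, hp, hA⟩ := PairEncoding.exists_mem_image_toMatrix hk hx hz habs hzx hzx'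
  exact Set.mem_iUnion.2 ⟨⟨p, hp⟩, hA⟩

theorem sparse_phase_retrieval_real_ae_general (k m n : ℕ)
    (hm : 2 * k ≤ m) :
    ∀ᵐ A : Fin m → Fin n → ℝ, ∀ x z : Fin n → ℝ,
      (Function.support x).ncard ≤ k →
      (Function.support z).ncard ≤ k →
      (∀ i, |(Matrix.of A).mulVec x i| = |(Matrix.of A).mulVec z i|) →
      z = x ∨ z = -x :=
  ae_forall_eq_or_eq_neg_of_abs_dotProduct_eq (by simpa using hm)

/-- For `m ≥ 2k` and `n ≥ 2k`, Lebesgue-almost every real `m × n` matrix `A` has the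
property that any two `k`-sparse vectors with the same phaseless measurements `|Ax| = |Az|`
agree up to global sign. -/
theorem sparse_phase_retrieval_real_ae (k m n : ℕ) (hk : 1 ≤ k)
    (hm : 2 * k ≤ m) (hn : 2 * k ≤ n) :
    ∀ᵐ A : Fin m → Fin n → ℝ, ∀ x z : Fin n → ℝ,
      (Function.support x).ncard ≤ k →
      (Function.support z).ncard ≤ k →
      (∀ i, |(Matrix.of A).mulVec x i| = |(Matrix.of A).mulVec z i|) →
      z = x ∨ z = -x :=
  sparse_phase_retrieval_real_ae_general k m n hm
end

section
/- For natural numbers k ≥ 1 and n ≥ 2k, there exists a matrix A ∈ ℝ^{2k×n} such that for all vectors x, z ∈ ℝ^n each having at most k nonzero entries, if |Ax| = |Az| entrywise, then z = x or z = -x. In particular, m = 2k phaseless measurements suffice for unique recovery of every k-sparse real signal up to global sign. -/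
/-!
If `|Ax| = |Az|`, let `S` be the set of rows on which `Ax` and `Az` agree, so that
`A_S (x - z) = 0` and `A_{Sᶜ} (x + z) = 0`. Let `I, J` be the supports, `|I| + |J| ≤ m`.
If `|I ∪ J| ≤ |S|`, then `x - z` is killed by a tall submatrix of `A` and `x = z`; symmetrically
`x = -z` if `|I ∪ J| ≤ |Sᶜ|`. Otherwise `|I ∩ J|` is at most both `|S|` and `|Sᶜ|`, and the whole
system in `(x, z)` has only the trivial solution. In every case the relevant linear system is
injective for a suitable 0/1 matrix whose rows read off single coordinates. Injectivity is the
nonvanishing of a Gram determinant, a polynomial in the entries of `A`, so one matrix avoiding the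
zero sets of these finitely many nonzero polynomials works for all configurations at once.
-/

open Finset Function

theorem MvPolynomial.exists_forall_eval_ne_zero {R σ ι : Type*} [CommRing R] [IsDomain R]
    [Infinite R] {s : Finset ι} {f : ι → MvPolynomial σ R} (hf : ∀ i ∈ s, f i ≠ 0) :
    ∃ a : σ → R, ∀ i ∈ s, eval a (f i) ≠ 0 := by
  by_contra! h
  refine prod_ne_zero_iff.mpr hf (MvPolynomial.funext fun a => ?_)
  obtain ⟨i, hi, hai⟩ := h a
  rw [map_prod, map_zero, prod_eq_zero hi hai]

namespace Matrix

variable {m n R : Type*}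

theorem injective_mulVec_iff_det_transpose_mul_ne_zero [Fintype m] [Fintype n] [DecidableEq n]
    [Field R] [LinearOrder R] [IsStrictOrderedRing R] (M : Matrix m n R) :
    Injective M.mulVec ↔ (Mᵀ * M).det ≠ 0 := by
  rw [← coe_mulVecLin, ← LinearMap.ker_eq_bot, ← ker_mulVecLin_transpose_mul_self,
    LinearMap.ker_eq_bot, coe_mulVecLin, mulVec_injective_iff_isUnit, isUnit_iff_isUnit_det,
    isUnit_iff_ne_zero]

section ReadingCoordinates

variable [Fintype n] [DecidableEq n] [Semiring R]

theorem exists_mulVec_apply_eq {γ : Type*} {e : γ → m} (he : Injective e) (col : γ → n) :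
    ∃ A : Matrix m n R, ∀ c y, (A *ᵥ y) (e c) = y (col c) :=
  ⟨extend e (fun c => Pi.single (col c) 1) 0, fun c y => by
    simp [mulVec, he.extend_apply, single_dotProduct]⟩

theorem exists_mulVec_apply_eq_of_card_le {P N : Finset m} (hPN : Disjoint P N) {U V : Finset n}
    (hU : #U ≤ #P) (hV : #V ≤ #N) :
    ∃ A : Matrix m n R, (∀ j ∈ U, ∃ i ∈ P, ∀ y, (A *ᵥ y) i = y j) ∧
      ∀ j ∈ V, ∃ i ∈ N, ∀ y, (A *ᵥ y) i = y j := by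
  obtain ⟨eU⟩ : Nonempty (U ↪ P) := Embedding.nonempty_of_card_le (by simpa using hU)
  obtain ⟨eV⟩ : Nonempty (V ↪ N) := Embedding.nonempty_of_card_le (by simpa using hV)
  have he : Injective (Sum.elim (fun u => (eU u : m)) (fun v => (eV v : m))) :=
    (Subtype.val_injective.comp eU.injective).sumElim (Subtype.val_injective.comp eV.injective)
      fun u v h => disjoint_left.mp hPN (eU u).2 ((congrArg (· ∈ N) h).mpr (eV v).2)
  obtain ⟨A, hA⟩ := exists_mulVec_apply_eq (R := R) he (Sum.elim Subtype.val Subtype.val)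
  exact ⟨A, fun j hj => ⟨_, (eU ⟨j, hj⟩).2, hA (.inl ⟨j, hj⟩)⟩,
    fun j hj => ⟨_, (eV ⟨j, hj⟩).2, hA (.inr ⟨j, hj⟩)⟩⟩

end ReadingCoordinates

section SignPatternSystem

variable [Fintype m] [DecidableEq m] [DecidableEq n]

def signPatternSystem [CommRing R] (A : Matrix m n R) (P N : Finset m) (I J : Finset n) :
    Matrix (m ⊕ (n ⊕ n)) (n ⊕ n) R :=
  fromRows
    (diagonal (fun i => if i ∈ P then (1 : R) else 0) * fromCols A (-A) +
      diagonal (fun i => if i ∈ N then (1 : R) else 0) * fromCols A A)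
    (diagonal (Sum.elim (fun j => if j ∈ I then (0 : R) else 1) (fun j => if j ∈ J then 0 else 1)))

theorem signPatternSystem_map [CommRing R] {S : Type*} [CommRing S] (f : R →+* S)
    (A : Matrix m n R) (P N : Finset m) (I J : Finset n) :
    (signPatternSystem A P N I J).map f = signPatternSystem (A.map f) P N I J := by
  ext (i | j | j) (j' | j') <;> simp [signPatternSystem, apply_ite f, diagonal_apply]

variable [Fintype n]

theorem signPatternSystem_mulVec_eq_zero_iff [CommRing R] {P N : Finset m} (hPN : Disjoint P N)
    (A : Matrix m n R) (I J : Finset n) (x z : n → R) :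
    signPatternSystem A P N I J *ᵥ Sum.elim x z = 0 ↔
      support x ⊆ I ∧ support z ⊆ J ∧ (∀ i ∈ P, (A *ᵥ x) i = (A *ᵥ z) i) ∧
        (∀ i ∈ N, (A *ᵥ x) i = -(A *ᵥ z) i) := by
  simp only [signPatternSystem, fromRows_mulVec, add_mulVec, ← mulVec_mulVec,
    fromCols_mulVec_sumElim, neg_mulVec]
  simp only [funext_iff, Pi.zero_apply, Sum.forall, Sum.elim_inl, Sum.elim_inr, Pi.add_apply,
    Pi.neg_apply, mulVec_diagonal, ite_mul, one_mul, zero_mul, ite_eq_left_iff, support_subset_iff,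
    ne_eq, SetLike.mem_coe]
  have := disjoint_left.mp hPN
  grind

end SignPatternSystem

section SignPattern

variable [Fintype n]

def IsSignPatternInjective (A : Matrix m n ℝ) (P N : Finset m) (I J : Finset n) : Prop :=
  ∀ x z : n → ℝ, support x ⊆ I → support z ⊆ J → (∀ i ∈ P, (A *ᵥ x) i = (A *ᵥ z) i) →
    (∀ i ∈ N, (A *ᵥ x) i = -(A *ᵥ z) i) → x = 0 ∧ z = 0

theorem isSignPatternInjective_iff_injective [Fintype m] [DecidableEq m] [DecidableEq n]
    {P N : Finset m} (hPN : Disjoint P N) (A : Matrix m n ℝ) (I J : Finset n) :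
    IsSignPatternInjective A P N I J ↔ Injective (signPatternSystem A P N I J).mulVec := by
  rw [← coe_mulVecLin, injective_iff_map_eq_zero, coe_mulVecLin]
  constructor
  · intro hA w hw
    rw [← Sum.elim_comp_inl_inr w] at hw ⊢
    obtain ⟨hx, hz, hP, hN⟩ := (signPatternSystem_mulVec_eq_zero_iff hPN A I J _ _).mp hw
    obtain ⟨h1, h2⟩ := hA _ _ hx hz hP hN
    rw [h1, h2, Sum.elim_zero_zero]
  · intro hA x z hx hz hP hN
    rw [← Sum.elim_eq_iff, Sum.elim_zero_zero]
    exact hA _ ((signPatternSystem_mulVec_eq_zero_iff hPN A I J x z).mpr ⟨hx, hz, hP, hN⟩)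

theorem exists_forall_isSignPatternInjective [Fintype m] [DecidableEq m] [DecidableEq n]
    (Q : Finset m → Finset m → Finset n → Finset n → Prop)
    (hQ : ∀ P N I J, Q P N I J →
      Disjoint P N ∧ ∃ A : Matrix m n ℝ, IsSignPatternInjective A P N I J) :
    ∃ A : Matrix m n ℝ, ∀ P N I J, Q P N I J → IsSignPatternInjective A P N I J := by
  let gramDet (c : Finset m × Finset m × Finset n × Finset n) : MvPolynomial (m × n) ℝ :=
    let M := signPatternSystem (mvPolynomialX m n ℝ) c.1 c.2.1 c.2.2.1 c.2.2.2
    (Mᵀ * M).det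
  have key (A : Matrix m n ℝ) P N I J (hPN : Disjoint P N) : IsSignPatternInjective A P N I J ↔
      MvPolynomial.eval (fun p => A p.1 p.2) (gramDet (P, N, I, J)) ≠ 0 := by
    have hX : (mvPolynomialX m n ℝ).map (MvPolynomial.eval fun p => A p.1 p.2) = A :=
      mvPolynomialX_map_eval₂ _ A
    rw [isSignPatternInjective_iff_injective hPN, injective_mulVec_iff_det_transpose_mul_ne_zero,
      RingHom.map_det, RingHom.mapMatrix_apply, Matrix.map_mul, transpose_map,
      signPatternSystem_map, hX]
  classical
  obtain ⟨a, ha⟩ := MvPolynomial.exists_forall_eval_ne_zero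
    (s := univ.filter fun c => Q c.1 c.2.1 c.2.2.1 c.2.2.2) (f := gramDet) fun c hc h0 => by
      obtain ⟨hPN, A, hA⟩ := hQ _ _ _ _ (mem_filter.mp hc).2
      exact (key A _ _ _ _ hPN).mp hA (by rw [h0, map_zero])
  exact ⟨of fun i j => a (i, j), fun P N I J hc =>
    (key _ P N I J (hQ P N I J hc).1).mpr (ha (P, N, I, J) (by simpa using hc))⟩

variable [DecidableEq n]

theorem exists_isSignPatternInjective {P N : Finset m} (hPN : Disjoint P N) {I J : Finset n}
    (hP : #(I ∩ J) ≤ #P) (hN : #(I ∩ J) ≤ #N) (hIJ : #I + #J ≤ #P + #N) :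
    ∃ A : Matrix m n ℝ, IsSignPatternInjective A P N I J := by
  -- Rows of `P` read off the coordinates in `U`, rows of `N` those in `V`, where
  -- `I ∩ J ⊆ U ∩ V` and `I ∪ J ⊆ U ∪ V`: then `x j = z j` on `U` and `x j = -z j` on `V`.
  obtain ⟨U, hIJU, hUIJ, hU⟩ := exists_subsuperset_card_eq inter_subset_union
    (le_min hP (card_le_card inter_subset_union)) (min_le_right #P #(I ∪ J))
  set V := (I ∩ J) ∪ ((I ∪ J) \ U) with hV_def
  have hV : #V ≤ #N := by
    have := card_union_add_card_inter I J
    grw [card_union_le, card_sdiff_of_subset hUIJ]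
    omega
  obtain ⟨A, hAU, hAV⟩ :=
    exists_mulVec_apply_eq_of_card_le (R := ℝ) hPN (hU.trans_le (min_le_left _ _)) hV
  refine ⟨A, fun x z hx hz hxzP hxzN => ?_⟩
  have hU' : ∀ j ∈ U, x j = z j := fun j hj => by
    obtain ⟨i, hi, hAi⟩ := hAU j hj
    simpa [hAi] using hxzP i hi
  have hV' : ∀ j ∈ V, x j = -z j := fun j hj => by
    obtain ⟨i, hi, hAi⟩ := hAV j hj
    simpa [hAi] using hxzN i hi
  have hx' : ∀ j ∉ I, x j = 0 := fun j hj => notMem_support.mp fun h => hj (hx h)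
  have hz' : ∀ j ∉ J, z j = 0 := fun j hj => notMem_support.mp fun h => hj (hz h)
  simp only [funext_iff, Pi.zero_apply, ← forall_and]
  intro j
  grind

def IsSignPatternGeneric (A : Matrix m n ℝ) : Prop :=
  ∀ P N I J, Disjoint P N → #(I ∩ J) ≤ #P → #(I ∩ J) ≤ #N → #I + #J ≤ #P + #N →
    IsSignPatternInjective A P N I J

theorem exists_isSignPatternGeneric [Fintype m] [DecidableEq m] :
    ∃ A : Matrix m n ℝ, IsSignPatternGeneric A := by
  obtain ⟨A, hA⟩ := exists_forall_isSignPatternInjective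
    (fun (P N : Finset m) (I J : Finset n) =>
      Disjoint P N ∧ #(I ∩ J) ≤ #P ∧ #(I ∩ J) ≤ #N ∧ #I + #J ≤ #P + #N)
    fun P N I J ⟨hPN, hP, hN, hIJ⟩ => ⟨hPN, exists_isSignPatternInjective hPN hP hN hIJ⟩
  exact ⟨A, fun P N I J hPN hP hN hIJ => hA P N I J ⟨hPN, hP, hN, hIJ⟩⟩

namespace IsSignPatternGeneric

theorem eq_zero_of_mulVec_eq_zero {A : Matrix m n ℝ} (hA : IsSignPatternGeneric A)
    {P : Finset m} {T : Finset n} (hT : #T ≤ #P) {d : n → ℝ} (hd : support d ⊆ T)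
    (hPd : ∀ i ∈ P, (A *ᵥ d) i = 0) : d = 0 :=
  (hA P ∅ T ∅ (disjoint_empty_right P) (by simp) (by simp) (by simpa using hT) d 0 hd
    (by simp) (by simpa using hPd) (by simp)).1

theorem eq_or_eq_neg_of_abs_mulVec_eq [Fintype m] {A : Matrix m n ℝ}
    (hA : IsSignPatternGeneric A) {I J : Finset n} (hIJ : #I + #J ≤ Fintype.card m)
    {x z : n → ℝ} (hx : support x ⊆ I) (hz : support z ⊆ J)
    (habs : ∀ i, |(A *ᵥ x) i| = |(A *ᵥ z) i|) : z = x ∨ z = -x := by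
  classical
  set S := univ.filter fun i => (A *ᵥ x) i = (A *ᵥ z) i
  have hS : ∀ i ∈ S, (A *ᵥ x) i = (A *ᵥ z) i := fun i hi => (mem_filter.mp hi).2
  have hSc : ∀ i ∈ Sᶜ, (A *ᵥ x) i = -(A *ᵥ z) i := fun i hi =>
    (abs_eq_abs.mp (habs i)).resolve_left (by simpa [S] using hi)
  have hsupp : support x ∪ support z ⊆ ↑(I ∪ J) := by
    rw [coe_union]
    exact Set.union_subset_union hx hz
  by_cases hcardS : #(I ∪ J) ≤ #S
  · refine .inl (sub_eq_zero.mp ?_).symm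
    exact hA.eq_zero_of_mulVec_eq_zero hcardS ((support_sub x z).trans hsupp) fun i hi => by
      simp [mulVec_sub, hS i hi]
  by_cases hcardSc : #(I ∪ J) ≤ #Sᶜ
  · refine .inr (eq_neg_of_add_eq_zero_right ?_)
    exact hA.eq_zero_of_mulVec_eq_zero hcardSc ((support_add x z).trans hsupp) fun i hi => by
      simp [mulVec_add, hSc i hi]
  have := card_union_add_card_inter I J
  have := card_add_card_compl S
  obtain ⟨rfl, rfl⟩ := hA S Sᶜ I J disjoint_compl_right (by omega) (by omega) (by omega) x z hx hz
    hS hSc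
  exact .inl rfl

end IsSignPatternGeneric

end SignPattern

end Matrix

theorem sparse_phase_retrieval_real_sufficient_general (k n : ℕ) :
    ∃ A : Matrix (Fin (2 * k)) (Fin n) ℝ, ∀ x z : Fin n → ℝ,
      (Function.support x).ncard ≤ k →
      (Function.support z).ncard ≤ k →
      (∀ i, |A.mulVec x i| = |A.mulVec z i|) →
      z = x ∨ z = -x := by
  obtain ⟨A, hA⟩ := Matrix.exists_isSignPatternGeneric (m := Fin (2 * k)) (n := Fin n)
  refine ⟨A, fun x z hx hz habs => hA.eq_or_eq_neg_of_abs_mulVec_eq ?_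
    (Set.toFinite _).coe_toFinset.superset (Set.toFinite _).coe_toFinset.superset habs⟩
  rw [← Set.ncard_eq_toFinset_card, ← Set.ncard_eq_toFinset_card, Fintype.card_fin]
  omega

/-- For `k ≥ 1` and `n ≥ 2k`, there is a real `2k × n` matrix `A` such that any two
`k`-sparse vectors with the same phaseless measurements `|Ax| = |Az|` agree up to
global sign: `m = 2k` phaseless measurements suffice. -/
theorem sparse_phase_retrieval_real_sufficient (k n : ℕ) (hk : 1 ≤ k) (hn : 2 * k ≤ n) :
    ∃ A : Matrix (Fin (2 * k)) (Fin n) ℝ, ∀ x z : Fin n → ℝ,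
      (Function.support x).ncard ≤ k →
      (Function.support z).ncard ≤ k →
      (∀ i, |A.mulVec x i| = |A.mulVec z i|) →
      z = x ∨ z = -x :=
  sparse_phase_retrieval_real_sufficient_general k n
end

section
/- For natural numbers k ≥ 1, m, n with m < 2k and n ≥ 2k, for EVERY matrix A ∈ ℝ^{m×n} there exist vectors x, z ∈ ℝ^n, each with at most k nonzero entries, such that |Ax| = |Az| entrywise, x ≠ z, and x ≠ -z. That is, fewer than 2k phaseless measurements never suffice for unique recovery of all k-sparse real signals up to global sign. -/
/-- For `k ≥ 1`, `m < 2k` and `n ≥ 2k`, EVERY real `m × n` matrix `A` admits two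
`k`-sparse vectors `x ≠ ±z` with the same phaseless measurements `|Ax| = |Az|`:
fewer than `2k` phaseless measurements never suffice. -/
theorem sparse_phase_retrieval_real_necessary (k m n : ℕ) (hk : 1 ≤ k)
    (hm : m < 2 * k) (hn : 2 * k ≤ n) (A : Matrix (Fin m) (Fin n) ℝ) :
    ∃ x z : Fin n → ℝ,
      (Function.support x).ncard ≤ k ∧
      (Function.support z).ncard ≤ k ∧
      (∀ i, |A.mulVec x i| = |A.mulVec z i|) ∧
      x ≠ z ∧ x ≠ -z := by
  classical
  -- extension-by-zero linear map from ℝ^{2k} to ℝ^n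
  let E : (Fin (2*k) → ℝ) →ₗ[ℝ] (Fin n → ℝ) :=
    { toFun := fun v j => if h : (j : ℕ) < 2*k then v ⟨j, h⟩ else 0
      map_add' := by intro u v; funext j; by_cases h : (j:ℕ) < 2*k <;> simp [h]
      map_smul' := by intro c v; funext j; by_cases h : (j:ℕ) < 2*k <;> simp [h] }
  let L := (Matrix.mulVecLin A).comp E
  have hker : LinearMap.ker L ≠ ⊥ := by
    apply LinearMap.ker_ne_bot_of_finrank_lt
    simpa using hm
  obtain ⟨v, hvmem, hv0⟩ := (Submodule.ne_bot_iff _).mp hker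
  have hAv : A.mulVec (E v) = 0 := hvmem
  set w : Fin n → ℝ := E v with hw
  have hw2k : ∀ j : Fin n, 2*k ≤ (j:ℕ) → w j = 0 := by
    intro j hj
    simp [hw, E, not_lt.mpr hj]
  have hwv : ∀ i : Fin (2*k), w (Fin.castLE hn i) = v i := by
    intro i
    simp [hw, E, i.isLt]
  have hwne : w ≠ 0 := by
    intro h
    apply hv0
    funext i
    have := congrFun h (Fin.castLE hn i)
    rw [hwv i] at this
    simpa using this
  set x : Fin n → ℝ := fun j => if (j:ℕ) < k then w j else 0 with hx
  set z : Fin n → ℝ := fun j => if k ≤ (j:ℕ) then -w j else 0 with hz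
  have hxzw : x = z + w := by
    funext j
    by_cases h : (j:ℕ) < k
    · simp [hx, hz, h, not_le.mpr h]
    · simp [hx, hz, h, not_lt.mp h]
  have hsum0 : ∀ j, x j + z j = 0 → w j = 0 := by
    intro j hj
    by_cases h : (j:ℕ) < k
    · simpa [hx, hz, h, not_le.mpr h] using hj
    · have : -w j = 0 := by simpa [hx, hz, h, not_lt.mp h] using hj
      linarith
  refine ⟨x, z, ?_, ?_, ?_, ?_, ?_⟩
  · -- support of x
    have : (Function.support x).ncard ≤ (Set.univ : Set (Fin k)).ncard := by
      refine Set.ncard_le_ncard_of_injOn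
        (fun j => (⟨(j:ℕ) % k, Nat.mod_lt _ (by omega)⟩ : Fin k))
        (fun a _ => trivial) ?_ Set.finite_univ
      · intro a ha b hb hab
        have ha' : (a:ℕ) < k := by
          by_contra h
          exact ha (by simp [hx, h])
        have hb' : (b:ℕ) < k := by
          by_contra h
          exact hb (by simp [hx, h])
        have : (a:ℕ) % k = (b:ℕ) % k := congrArg Fin.val hab
        rw [Nat.mod_eq_of_lt ha', Nat.mod_eq_of_lt hb'] at this
        exact Fin.ext this
    simpa [Set.ncard_univ] using this
  · -- support of z
    have : (Function.support z).ncard ≤ (Set.univ : Set (Fin k)).ncard := by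
      refine Set.ncard_le_ncard_of_injOn
        (fun j => (⟨((j:ℕ) - k) % k, Nat.mod_lt _ (by omega)⟩ : Fin k))
        (fun a _ => trivial) ?_ Set.finite_univ
      · intro a ha b hb hab
        have ha1 : k ≤ (a:ℕ) := by
          by_contra h
          exact ha (by simp [hz, h])
        have hb1 : k ≤ (b:ℕ) := by
          by_contra h
          exact hb (by simp [hz, h])
        have ha2 : (a:ℕ) < 2*k := by
          by_contra h
          exact ha (by simp [hz, ha1, hw2k a (not_lt.mp h)])
        have hb2 : (b:ℕ) < 2*k := by
          by_contra h
          exact hb (by simp [hz, hb1, hw2k b (not_lt.mp h)])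
        have : ((a:ℕ) - k) % k = ((b:ℕ) - k) % k := congrArg Fin.val hab
        rw [Nat.mod_eq_of_lt (by omega), Nat.mod_eq_of_lt (by omega)] at this
        exact Fin.ext (by omega)
    simpa [Set.ncard_univ] using this
  · -- measurements
    intro i
    have : A.mulVec x = A.mulVec z := by
      rw [hxzw, Matrix.mulVec_add, hAv]
      simp
    rw [this]
  · -- x ≠ z
    intro h
    apply hwne
    have := hxzw
    rw [h] at this
    funext j
    have := congrFun this j
    simpa using this.symm
  · -- x ≠ -z
    intro h
    apply hwne
    funext j
    apply hsum0
    have := congrFun h j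
    simp only [Pi.neg_apply] at this
    simp [this]
end

section
/- For natural numbers k ≥ 1 and n ≥ 2k, the following are equivalent: (i) m ≥ 2k; (ii) there exists a matrix A ∈ ℝ^{m×n} such that for all vectors x, z ∈ ℝ^n each having at most k nonzero entries, |Ax| = |Az| implies z = x or z = -x. Hence m = 2k phaseless measurements are necessary and sufficient for unique sparse phase retrieval of every k-sparse real signal. -/
/-!
If `|Ax| = |Az|`, every row of `A` annihilates `x - z` or `x + z`; call the two classes of rows
`S₀` and `S₁`, and let `X`, `Z` be the supports of `x`, `z`. For a matrix whose entries are
algebraically independent, every square system whose coefficients are `0` or `±` entries of `A`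
and nonzero diagonal is nonsingular as soon as no other nonzero coefficient uses the entry of `A`
of a diagonal one: specialising the entries of `A` to the indicator of the diagonal entries
leaves a diagonal matrix of signs.

If `S₀` (or `S₁`) alone has `|X ∪ Z|` rows, this forces `x - z = 0` (or `x + z = 0`). Otherwise
`|X ∩ Z| < |S₀|, |S₁|`, and `((x - z)|_X, (x + z)|_Z)` solves such a square system of size
`|X| + |Z| ≤ 2k`, once Hall's theorem matches each coordinate of `X ∩ Z` with one row of `S₀` on
the `X` side and one row of `S₁` on the `Z` side; hence `x = z = 0`.

Conversely, a `2k`-sparse `v` with `Av = 0` splits as `x - z` with `x`, `z` `k`-sparse of disjoint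
supports; then `Ax = Az` forces `z = ±x`, hence `v = 0`. So any `2k` columns of `A` are linearly
independent, and `2k ≤ m`.
-/

open Function Finset Matrix MvPolynomial

section

variable {m n : Type*} [Fintype n]

def SparsePhaseRetrieval (k : ℕ) (A : Matrix m n ℝ) : Prop :=
  ∀ x z : n → ℝ, (support x).ncard ≤ k → (support z).ncard ≤ k →
    (∀ i, |(A *ᵥ x) i| = |(A *ᵥ z) i|) → z = x ∨ z = -x

variable {k : ℕ} {A : Matrix m n ℝ}

theorem SparsePhaseRetrieval.eq_zero_of_mulVec_eq_zero (hA : SparsePhaseRetrieval k A)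
    {v : n → ℝ} (hv : (support v).ncard ≤ 2 * k) (hAv : A *ᵥ v = 0) : v = 0 := by
  obtain ⟨s, hsv, hs⟩ := Set.exists_subset_card_eq (Nat.div_le_self (support v).ncard 2)
  set x := s.indicator v
  set w := sᶜ.indicator v
  have hxw : x + w = v := s.indicator_self_add_compl v
  have hx : (support x).ncard ≤ k := by
    rw [Set.support_indicator, Set.inter_eq_left.mpr hsv, hs]; omega
  have hw : (support (-w)).ncard ≤ k := by
    rw [Function.support_neg, Set.support_indicator, Set.inter_comm, ← Set.sdiff_eq,
      Set.ncard_sdiff hsv (Set.toFinite _), hs]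
    omega
  have hAx : A *ᵥ x = A *ᵥ -w := by
    rw [mulVec_neg, eq_neg_iff_add_eq_zero, ← mulVec_add, hxw, hAv]
  rcases hA x (-w) hx hw (fun i => by rw [hAx]) with h | h
  · rw [← hxw, ← h, neg_add_cancel]
  · have hwx : w = x := neg_injective h
    ext j
    by_cases hj : j ∈ s
    · simpa [x, w, hj, eq_comm] using congrFun hwx j
    · simpa [x, w, hj] using congrFun hwx j

theorem SparsePhaseRetrieval.two_mul_le_card [Fintype m] (hA : SparsePhaseRetrieval k A)
    (hn : 2 * k ≤ Fintype.card n) : 2 * k ≤ Fintype.card m := by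
  obtain ⟨e⟩ := Embedding.nonempty_of_card_le (α := Fin (2 * k)) (by simpa using hn)
  let L := A.mulVecLin ∘ₗ ExtendByZero.linearMap ℝ e
  have hL : Injective L := by
    refine (injective_iff_map_eq_zero L).mpr fun c hc => ?_
    have hsupp : (support (extend e c 0)).ncard ≤ 2 * k := by
      calc (support (extend e c 0)).ncard ≤ (Set.range e).ncard :=
            Set.ncard_le_ncard (support_extend_zero_subset.trans (Set.image_subset_range _ _))
        _ = 2 * k := by simp [Set.ncard_range_of_injective e.injective]
    have h0 := hA.eq_zero_of_mulVec_eq_zero hsupp hc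
    ext i
    simpa [e.injective.extend_apply] using congrFun h0 (e i)
  simpa using LinearMap.finrank_le_finrank_of_injective hL

end

open Cardinal in
theorem exists_algebraicIndependent_real (ι : Type*) [Finite ι] :
    ∃ x : ι → ℝ, AlgebraicIndependent ℤ x := by
  obtain ⟨s, hs⟩ := exists_isTranscendenceBasis ℤ ℝ
  have : Infinite s := by
    by_contra hfin
    rw [not_infinite_iff_finite] at hfin
    suffices #ℝ ≤ ℵ₀ from (mk_real ▸ aleph0_lt_continuum).not_ge this
    rcases isEmpty_or_nonempty s with hs₀ | hs₀
    · have := hs.isEmpty_iff_isAlgebraic.mp hs₀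
      simpa using Algebra.IsAlgebraic.cardinalMk_le_max ℤ ℝ
    · simpa [mk_int, (lt_aleph0_of_finite s).le] using hs.lift_cardinalMk_eq_max_lift.le
  exact ⟨_, hs.1.comp _ ((Finite.equivFin ι).toEmbedding.trans
    (Fin.valEmbedding.trans (Infinite.natEmbedding s))).injective⟩

section

variable {m n ι : Type*} [Fintype ι] [DecidableEq ι]

theorem det_hadamard_X_ne_zero (E : Matrix ι ι ℤ) (ρ : ι → m) (γ : ι → n)
    (hdiag : ∀ i, E i i ≠ 0) (hoff : ∀ i j i', E i j ≠ 0 → ρ i = ρ i' → γ j = γ i' → i = j) :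
    (E.map C ⊙ of fun i j => (X (ρ i, γ j) : MvPolynomial (m × n) ℤ)).det ≠ 0 := by
  -- at the indicator of the diagonal positions, only the diagonal entries survive
  let pt : m × n → ℤ := (Set.range fun i => (ρ i, γ i)).indicator 1
  have hpt : (E.map C ⊙ of fun i j => (X (ρ i, γ j) : MvPolynomial (m × n) ℤ)).map (eval pt) =
      diagonal fun i => E i i := by
    ext i j
    simp only [map_apply, hadamard_apply, of_apply, eval_mul, eval_C, eval_X]
    by_cases hij : i = j
    · subst hij
      simp [pt, Set.indicator_of_mem (Set.mem_range_self i)]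
    · rw [diagonal_apply_ne _ hij]
      by_cases hE : E i j = 0
      · rw [hE, zero_mul]
      · rw [show pt (ρ i, γ j) = 0 from Set.indicator_of_notMem ?_ _, mul_zero]
        rintro ⟨i', hi'⟩
        exact hij (hoff i j i' hE (congrArg Prod.fst hi').symm (congrArg Prod.snd hi').symm)
  intro h
  have := congrArg (MvPolynomial.eval pt) h
  rw [RingHom.map_det, RingHom.mapMatrix_apply, hpt, det_diagonal, map_zero] at this
  exact Finset.prod_ne_zero_iff.mpr (fun i _ => hdiag i) this

theorem AlgebraicIndependent.det_hadamard_submatrix_ne_zero {R : Type*} [CommRing R]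
    {A : Matrix m n R} (hA : AlgebraicIndependent ℤ (uncurry A)) (E : Matrix ι ι ℤ)
    (ρ : ι → m) (γ : ι → n) (hdiag : ∀ i, E i i ≠ 0)
    (hoff : ∀ i j i', E i j ≠ 0 → ρ i = ρ i' → γ j = γ i' → i = j) :
    (E.map (↑) ⊙ A.submatrix ρ γ).det ≠ 0 := by
  have h := (map_ne_zero_iff _ hA).mpr (det_hadamard_X_ne_zero E ρ γ hdiag hoff)
  rw [AlgHom.map_det, AlgHom.mapMatrix_apply] at h
  convert h using 2
  ext i j
  simp [uncurry]

end

theorem exists_injective_mapsTo_of_card_le {ι α : Type*} [Fintype ι] [DecidableEq ι]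
    [DecidableEq α] {X₀ X₁ : Finset ι} {S₀ S₁ : Finset α} (hX : Disjoint X₀ X₁)
    (h₀ : #X₀ ≤ #S₀) (h₁ : #X₁ ≤ #S₁) (h : Fintype.card ι ≤ #(S₀ ∪ S₁)) :
    ∃ f : ι → α, Injective f ∧ (∀ i, f i ∈ S₀ ∪ S₁) ∧
      (∀ i ∈ X₀, f i ∈ S₀) ∧ ∀ i ∈ X₁, f i ∈ S₁ := by
  let t : ι → Finset α := fun i => if i ∈ X₀ then S₀ else if i ∈ X₁ then S₁ else S₀ ∪ S₁
  have hall : ∀ s : Finset ι, #s ≤ #(s.biUnion t) := by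
    intro s
    rcases s.eq_empty_or_nonempty with rfl | ⟨a, ha⟩
    · simp
    by_cases hs₀ : s ⊆ X₀
    · calc #s ≤ #X₀ := card_le_card hs₀
        _ ≤ #S₀ := h₀
        _ ≤ #(s.biUnion t) := card_le_card fun r hr =>
          mem_biUnion.mpr ⟨a, ha, by simpa [t, hs₀ ha] using hr⟩
    by_cases hs₁ : s ⊆ X₁
    · calc #s ≤ #X₁ := card_le_card hs₁
        _ ≤ #S₁ := h₁
        _ ≤ #(s.biUnion t) := card_le_card fun r hr =>
          mem_biUnion.mpr ⟨a, ha, by simpa [t, hs₁ ha, disjoint_right.mp hX (hs₁ ha)] using hr⟩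
    obtain ⟨b, hb, hb₀⟩ := not_subset.mp hs₀
    obtain ⟨c, hc, hc₁⟩ := not_subset.mp hs₁
    calc #s ≤ Fintype.card ι := card_le_univ s
      _ ≤ #(S₀ ∪ S₁) := h
      _ ≤ #(s.biUnion t) := card_le_card fun r hr => by
        rcases mem_union.mp hr with hr | hr
        · exact mem_biUnion.mpr ⟨c, hc, by by_cases c ∈ X₀ <;> simp_all [t]⟩
        · exact mem_biUnion.mpr ⟨b, hb, by by_cases b ∈ X₁ <;> simp_all [t]⟩
  obtain ⟨f, hf, hft⟩ := (all_card_le_biUnion_card_iff_exists_injective t).mp hall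
  refine ⟨f, hf, fun i => ?_, fun i hi => by simpa [t, hi] using hft i, fun i hi => ?_⟩
  · have := hft i
    by_cases hi₀ : i ∈ X₀ <;> by_cases hi₁ : i ∈ X₁ <;> simp_all [t]
  · simpa [t, hi, disjoint_right.mp hX hi] using hft i

theorem Finset.sum_coe_add_sum_coe_ite {n M : Type*} [Fintype n] [DecidableEq n]
    [AddCommMonoid M] {X Z : Finset n} {f : n → M} (hf : ∀ j ∉ X ∪ Z, f j = 0) :
    ∑ a : X, f a + ∑ b : Z, (if (b : n) ∉ X then f b else 0) = ∑ j, f j := by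
  rw [sum_coe_sort X f, sum_coe_sort Z (fun b => if b ∉ X then f b else 0), ← sum_filter,
    ← sdiff_eq_filter, ← sum_union disjoint_sdiff, union_sdiff_self_eq_union]
  exact sum_subset (subset_univ _) fun j _ hj => hf j hj

section

variable {m n : Type*} [DecidableEq m] [DecidableEq n] {X Z : Finset n} {S₀ : Finset m}
  {ρ : X ⊕ Z → m}

/-- The off-block coefficients come from `x - z = -(x + z)` on `Z \ X` and `x + z = x - z` on
`X \ Z`. -/
def phaseSigns (X Z : Finset n) (S₀ : Finset m) (ρ : X ⊕ Z → m) : Matrix (X ⊕ Z) (X ⊕ Z) ℤ :=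
  of fun i => if ρ i ∈ S₀ then Sum.elim 1 fun b => if ↑b ∉ X then -1 else 0
    else Sum.elim (fun a => if ↑a ∉ Z then 1 else 0) 1

theorem det_phaseSigns_hadamard_ne_zero {A : Matrix m n ℝ}
    (hA : AlgebraicIndependent ℤ (uncurry A)) (hρ : Injective ρ)
    (hρ₀ : ∀ a : X, ↑a ∈ Z → ρ (.inl a) ∈ S₀) (hρ₁ : ∀ b : Z, ↑b ∈ X → ρ (.inr b) ∉ S₀) :
    ((phaseSigns X Z S₀ ρ).map (↑) ⊙ A.submatrix ρ (Sum.elim (↑) (↑))).det ≠ 0 := by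
  refine hA.det_hadamard_submatrix_ne_zero _ ρ _ (fun i => ?_) fun i j i' hE hii' hγ => ?_
  · rcases i with a | b
    · by_cases hi : ρ (.inl a) ∈ S₀
      · simp [phaseSigns, hi]
      · simp [phaseSigns, hi, mt (hρ₀ a) hi]
    · by_cases hi : ρ (.inr b) ∈ S₀
      · simp [phaseSigns, hi, mt (hρ₁ b) (not_not.mpr hi)]
      · simp [phaseSigns, hi]
  · obtain rfl := hρ hii'
    rcases i with a | b <;> rcases j with a' | b' <;>
      simp only [Sum.elim_inl, Sum.elim_inr] at hγ
    · exact congrArg Sum.inl (Subtype.ext hγ.symm)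
    · simp [phaseSigns, hρ₀ a (hγ ▸ b'.2), show (b' : n) ∈ X from hγ ▸ a.2] at hE
    · simp [phaseSigns, hρ₁ b (hγ ▸ a'.2), show (a' : n) ∈ Z from hγ ▸ b.2] at hE
    · exact congrArg Sum.inr (Subtype.ext hγ.symm)

variable [Fintype n]

theorem phaseSigns_hadamard_mulVec (A : Matrix m n ℝ) {x z : n → ℝ} (hx : ∀ j ∉ X, x j = 0)
    (hz : ∀ j ∉ Z, z j = 0) (i : X ⊕ Z) :
    ((phaseSigns X Z S₀ ρ).map (↑) ⊙ A.submatrix ρ (Sum.elim (↑) (↑)) *ᵥ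
        Sum.elim (fun a => (x - z) a) fun b => (x + z) b) i =
      if ρ i ∈ S₀ then (A *ᵥ (x - z)) (ρ i) else (A *ᵥ (x + z)) (ρ i) := by
  have hout : ∀ j ∉ X ∪ Z, x j = 0 ∧ z j = 0 := fun j hj => by
    rw [mem_union, not_or] at hj
    exact ⟨hx j hj.1, hz j hj.2⟩
  simp only [mulVec, dotProduct, Fintype.sum_sum_type]
  split_ifs with hi
  · rw [← sum_coe_add_sum_coe_ite (X := X) (Z := Z) fun j hj => by simp [hout j hj]]
    congr 1
    · simp [phaseSigns, hi]
    · refine sum_congr rfl fun b _ => ?_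
      by_cases hb : ↑b ∈ X <;> simp [phaseSigns, hi, hb, hx b]
  · rw [add_comm, ← sum_coe_add_sum_coe_ite (X := Z) (Z := X)
      fun j hj => by simp [hout j (by rwa [union_comm])]]
    congr 1
    · simp [phaseSigns, hi]
    · refine sum_congr rfl fun a _ => ?_
      by_cases ha : ↑a ∈ Z <;> simp [phaseSigns, hi, ha, hz a]

theorem eq_zero_of_mulVec_sub_eq_zero_of_mulVec_add_eq_zero {A : Matrix m n ℝ}
    (hA : AlgebraicIndependent ℤ (uncurry A)) {x z : n → ℝ} (hx : ∀ j ∉ X, x j = 0)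
    (hz : ∀ j ∉ Z, z j = 0) {S₁ : Finset m} (hS : Disjoint S₀ S₁)
    (h₀ : ∀ i ∈ S₀, (A *ᵥ (x - z)) i = 0) (h₁ : ∀ i ∈ S₁, (A *ᵥ (x + z)) i = 0)
    (hcard : #X + #Z ≤ #S₀ + #S₁) (hK₀ : #(X ∩ Z) ≤ #S₀) (hK₁ : #(X ∩ Z) ≤ #S₁) :
    x = 0 ∧ z = 0 := by
  obtain ⟨ρ, hρ, hρS, hρ₀, hρ₁⟩ := exists_injective_mapsTo_of_card_le (ι := X ⊕ Z)
    (X₀ := ((X ∩ Z).subtype (· ∈ X)).map .inl) (X₁ := ((X ∩ Z).subtype (· ∈ Z)).map .inr)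
    (S₀ := S₀) (S₁ := S₁) (by simp [disjoint_left])
    (by rwa [card_map, card_subtype, filter_true_of_mem fun j hj => (mem_inter.mp hj).1])
    (by rwa [card_map, card_subtype, filter_true_of_mem fun j hj => (mem_inter.mp hj).2])
    (by simpa [card_union_of_disjoint hS])
  have hdet := det_phaseSigns_hadamard_ne_zero hA hρ (fun a ha => hρ₀ _ (by simp [ha]))
    (fun b hb => disjoint_right.mp hS (hρ₁ _ (by simp [hb])))
  have hw := eq_zero_of_mulVec_eq_zero hdet <| funext fun i => by
    rw [phaseSigns_hadamard_mulVec A hx hz, Pi.zero_apply]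
    split_ifs with hi
    exacts [h₀ _ hi, h₁ _ ((mem_union.mp (hρS i)).resolve_left hi)]
  suffices ∀ j, x j = 0 ∧ z j = 0 from ⟨funext fun j => (this j).1, funext fun j => (this j).2⟩
  intro j
  have hu : j ∈ X → x j - z j = 0 := fun hj => congrFun hw (.inl ⟨j, hj⟩)
  have hv : j ∈ Z → x j + z j = 0 := fun hj => congrFun hw (.inr ⟨j, hj⟩)
  by_cases hjX : j ∈ X <;> by_cases hjZ : j ∈ Z
  · have := hu hjX; have := hv hjZ; constructor <;> linarith
  · have := hu hjX; have := hz j hjZ; constructor <;> linarith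
  · have := hx j hjX; have := hv hjZ; constructor <;> linarith
  · exact ⟨hx j hjX, hz j hjZ⟩

theorem eq_zero_of_mulVec_eq_zero_on {A : Matrix m n ℝ} (hA : AlgebraicIndependent ℤ (uncurry A))
    {y : n → ℝ} {Y : Finset n} (hy : ∀ j ∉ Y, y j = 0) {S : Finset m} (hYS : #Y ≤ #S)
    (h : ∀ i ∈ S, (A *ᵥ y) i = 0) : y = 0 :=
  (eq_zero_of_mulVec_sub_eq_zero_of_mulVec_add_eq_zero hA (z := 0) (Z := ∅) hy (fun _ _ => rfl)
    (disjoint_empty_right S) (by simpa using h) (by simp) (by simpa using hYS) (by simp)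
    (by simp)).1

end

theorem sparsePhaseRetrieval_of_algebraicIndependent {m n : Type*} [Fintype m] [Fintype n]
    {A : Matrix m n ℝ} (hA : AlgebraicIndependent ℤ (uncurry A)) {k : ℕ}
    (hm : 2 * k ≤ Fintype.card m) :
    SparsePhaseRetrieval k A := by
  classical
  intro x z hx hz habs
  rw [Set.ncard_eq_toFinset_card'] at hx hz
  set X := (support x).toFinset
  set Z := (support z).toFinset
  have hxX : ∀ j ∉ X, x j = 0 := by simp [X]
  have hzZ : ∀ j ∉ Z, z j = 0 := by simp [Z]
  have hout : ∀ j ∉ X ∪ Z, x j = 0 ∧ z j = 0 := fun j hj => by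
    rw [mem_union, not_or] at hj
    exact ⟨hxX j hj.1, hzZ j hj.2⟩
  have hsub : ∀ j ∉ X ∪ Z, (x - z) j = 0 := fun j hj => by simp [hout j hj]
  have hadd : ∀ j ∉ X ∪ Z, (x + z) j = 0 := fun j hj => by simp [hout j hj]
  let S := univ.filter fun i => (A *ᵥ (x - z)) i = 0
  have hS : ∀ i ∈ S, (A *ᵥ (x - z)) i = 0 := by simp [S]
  have hSc : ∀ i ∈ Sᶜ, (A *ᵥ (x + z)) i = 0 := fun i hi => by
    rcases abs_eq_abs.mp (habs i) with h | h
    · simp [S, mulVec_sub, h] at hi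
    · simp [mulVec_add, h]
  by_cases h₀ : #(X ∪ Z) ≤ #S
  · left
    exact (sub_eq_zero.mp (eq_zero_of_mulVec_eq_zero_on hA hsub h₀ hS)).symm
  by_cases h₁ : #(X ∪ Z) ≤ #Sᶜ
  · right
    exact eq_neg_of_add_eq_zero_right (eq_zero_of_mulVec_eq_zero_on hA hadd h₁ hSc)
  have := card_union_add_card_inter X Z
  have := card_add_card_compl S
  obtain ⟨rfl, rfl⟩ := eq_zero_of_mulVec_sub_eq_zero_of_mulVec_add_eq_zero hA hxX hzZ
    disjoint_compl_right hS hSc (by omega) (by omega) (by omega)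
  simp

theorem sparse_phase_retrieval_real_iff_general (k m n : ℕ) (hn : 2 * k ≤ n) :
    2 * k ≤ m ↔
      ∃ A : Matrix (Fin m) (Fin n) ℝ, ∀ x z : Fin n → ℝ,
        (Function.support x).ncard ≤ k →
        (Function.support z).ncard ≤ k →
        (∀ i, |A.mulVec x i| = |A.mulVec z i|) →
        z = x ∨ z = -x := by
  constructor
  · intro hm
    obtain ⟨a, ha⟩ := exists_algebraicIndependent_real (Fin m × Fin n)
    rw [← uncurry_curry a] at ha
    exact ⟨curry a, sparsePhaseRetrieval_of_algebraicIndependent ha (by rwa [Fintype.card_fin])⟩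
  · rintro ⟨A, hA⟩
    simpa only [Fintype.card_fin] using
      SparsePhaseRetrieval.two_mul_le_card hA (by rwa [Fintype.card_fin])

/-- For `k ≥ 1` and `n ≥ 2k`: `m ≥ 2k` holds if and only if there exists a real
`m × n` matrix `A` such that any two `k`-sparse vectors with the same phaseless
measurements agree up to global sign. Hence `m = 2k` phaseless measurements are
necessary and sufficient for unique sparse phase retrieval. -/
theorem sparse_phase_retrieval_real_iff (k m n : ℕ) (hk : 1 ≤ k) (hn : 2 * k ≤ n) :
    2 * k ≤ m ↔
      ∃ A : Matrix (Fin m) (Fin n) ℝ, ∀ x z : Fin n → ℝ,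
        (Function.support x).ncard ≤ k →
        (Function.support z).ncard ≤ k →
        (∀ i, |A.mulVec x i| = |A.mulVec z i|) →
        z = x ∨ z = -x :=
  sparse_phase_retrieval_real_iff_general k m n hn
end

section
/- Let k ≥ 1, m, n be natural numbers with m ≥ 2k and n ≥ 2k. For Lebesgue-almost every matrix A ∈ ℝ^{m×n} the following holds: for every pair of disjoint index sets I, J ⊆ {1, …, n} with |I| = |J| = k and every sign vector ε ∈ {-1, +1}^m, the m×2k matrix M whose first k columns are the columns of A indexed by I and whose last k columns are the columns of diag(ε)·A indexed by J has rank 2k (full column rank). -/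
/-!
For fixed `I`, `J`, `ε`, the columns of `[A_I | diag(ε)·A_J]` are the image of `A` under a
surjective linear map, and the push-forward of Lebesgue measure under such a map is a multiple of
Lebesgue measure. So it suffices that almost every family of `2k ≤ m` vectors of `ℝ^m` is linearly
independent, which follows by Fubini, one vector at a time, because a proper subspace is a null
set. There are only countably many choices of `I`, `J`, `ε`.
-/

open MeasureTheory Measure Module

section LinearIndependence

variable {E : Type*} [NormedAddCommGroup E] [NormedSpace ℝ E]

lemma span_range_ne_top_of_card_lt {ι : Type*} [Fintype ι] (v : ι → E)
    (hι : Fintype.card ι < finrank ℝ E) : Submodule.span ℝ (Set.range v) ≠ ⊤ := by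
  intro h
  have := finrank_range_le_card (R := ℝ) v
  rw [Set.finrank, h, finrank_top] at this
  omega

variable [FiniteDimensional ℝ E] [MeasurableSpace E] [BorelSpace E]

theorem ae_linearIndependent_pi_fin (μ : Measure E) [IsAddHaarMeasure μ] :
    ∀ {r : ℕ}, r ≤ finrank ℝ E →
      ∀ᵐ v ∂(Measure.pi fun _ : Fin r => μ), LinearIndependent ℝ v
  | 0, _ => Filter.Eventually.of_forall fun _ => linearIndependent_empty_type
  | r + 1, hr => by
    let e := MeasurableEquiv.piFinSuccAbove (fun _ : Fin (r + 1) => E) 0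
    have he : MeasurableSet {z : E × (Fin r → E) | LinearIndependent ℝ (e.symm z)} :=
      isOpen_setOfPred_linearIndependent.measurableSet.preimage e.symm.measurable
    have hcons : ∀ z, e.symm z = Fin.cons z.1 z.2 := fun z => Fin.insertNth_zero' z.1 z.2
    suffices ∀ᵐ z ∂μ.prod (Measure.pi fun _ : Fin r => μ), LinearIndependent ℝ (e.symm z) from
      ((measurePreserving_piFinSuccAbove (fun _ => μ) 0).quasiMeasurePreserving.ae this).mono
        fun v hv => e.symm_apply_apply v ▸ hv
    refine (ae_prod_iff_ae_ae he).2 ((ae_ae_comm he).2 ?_)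
    filter_upwards [ae_linearIndependent_pi_fin μ (Nat.le_of_succ_le hr)] with v hv
    have hnull := addHaar_submodule μ _ (span_range_ne_top_of_card_lt v (by simpa using hr))
    filter_upwards [measure_eq_zero_iff_ae_notMem.1 hnull] with x hx
    rw [hcons]
    exact linearIndependent_finCons.2 ⟨hv, hx⟩

theorem ae_linearIndependent_of_surjective {X ι : Type*} [NormedAddCommGroup X] [NormedSpace ℝ X]
    [FiniteDimensional ℝ X] [MeasurableSpace X] [BorelSpace X] [Fintype ι] (μ : Measure X)
    [IsAddHaarMeasure μ] {L : X →ₗ[ℝ] ι → E} (hL : Function.Surjective L)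
    (hι : Fintype.card ι ≤ finrank ℝ E) : ∀ᵐ x ∂μ, LinearIndependent ℝ (L x) := by
  have hs : MeasurableSet {v : ι → E | LinearIndependent ℝ v} :=
    isOpen_setOfPred_linearIndependent.measurableSet
  let e := LinearEquiv.funCongrLeft ℝ E (Fintype.equivFin ι)
  have h_fin := ae_linearIndependent_pi_fin (addHaar : Measure E) hι
  have h_pi : ∀ᵐ v ∂(addHaar : Measure (ι → E)), LinearIndependent ℝ v :=
    (ae_comp_linearMap_mem_iff e.toLinearMap _ _ e.surjective hs).1 <|
      h_fin.mono fun v hv => hv.comp _ (Fintype.equivFin ι).injective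
  exact (ae_comp_linearMap_mem_iff L μ addHaar hL hs).2 h_pi

end LinearIndependence

section ScaledColumns

variable {𝕜 ρ κ ι : Type*} [Field 𝕜]

def scaledColumns (c : ι → κ) (σ : ι → ρ → 𝕜) : (ρ → κ → 𝕜) →ₗ[𝕜] ι → ρ → 𝕜 where
  toFun A p i := σ p i * A i (c p)
  map_add' A B := by ext; simp [mul_add]
  map_smul' a A := by ext; simp [mul_left_comm]

lemma scaledColumns_surjective {c : ι → κ} (hc : c.Injective) {σ : ι → ρ → 𝕜}
    (hσ : ∀ p i, σ p i ≠ 0) : Function.Surjective (scaledColumns c σ) := by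
  intro w
  refine ⟨fun i => Function.extend c (fun p => (σ p i)⁻¹ * w p i) 0, ?_⟩
  ext p i
  simp [scaledColumns, hc.extend_apply, hσ]

end ScaledColumns

lemma Matrix.rank_eq_card_of_linearIndependent_col {𝕜 ρ ι : Type*} [Field 𝕜] [Fintype ρ]
    [Fintype ι] {M : Matrix ρ ι 𝕜} (h : LinearIndependent 𝕜 M.col) : M.rank = Fintype.card ι := by
  rw [← M.rank_transpose]
  exact LinearIndependent.rank_matrix (by rwa [Matrix.row_transpose])

theorem disjoint_support_full_rank_ae_general (k m n : ℕ) (hm : 2 * k ≤ m) :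
    ∀ᵐ A : Fin m → Fin n → ℝ,
      ∀ (I J : Finset (Fin n)) (hI : I.card = k) (hJ : J.card = k),
        Disjoint I J →
        ∀ ε : Fin m → ℝ, (∀ i, ε i = 1 ∨ ε i = -1) →
          (Matrix.of fun (i : Fin m) (j : Fin k ⊕ Fin k) =>
            Sum.elim (fun a => A i (I.orderEmbOfFin hI a))
                     (fun b => ε i * A i (J.orderEmbOfFin hJ b)) j).rank = 2 * k := by
  have : IsAddHaarMeasure (volume : Measure (Fin m → Fin n → ℝ)) := pi.isAddHaarMeasure _
  have h_signs : {ε : Fin m → ℝ | ∀ i, ε i = 1 ∨ ε i = -1}.Countable :=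
    ((Set.Finite.pi fun _ => Set.toFinite {1, -1}).subset fun ε (hε : ∀ i, _) i _ => hε i).countable
  refine ae_all_iff.2 fun I => ae_all_iff.2 fun J => ae_all_iff.2 fun hI => ae_all_iff.2 fun hJ =>
    ae_all_iff.2 fun hIJ => (ae_ball_iff h_signs).2 fun ε hε => ?_
  let c : Fin k ⊕ Fin k → Fin n := Sum.elim (I.orderEmbOfFin hI) (J.orderEmbOfFin hJ)
  have hc : c.Injective := (I.orderEmbOfFin hI).injective.sumElim (J.orderEmbOfFin hJ).injective
    fun a b hab => Finset.disjoint_left.1 hIJ (I.orderEmbOfFin_mem hI a)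
      (hab ▸ J.orderEmbOfFin_mem hJ b)
  let σ : Fin k ⊕ Fin k → Fin m → ℝ := fun p i => Sum.elim 1 (fun _ => ε i) p
  have hσ : ∀ p i, σ p i ≠ 0 := by
    rintro (_ | _) i
    · simp [σ]
    · rcases hε i with h | h <;> simp [σ, h]
  filter_upwards [ae_linearIndependent_of_surjective volume (scaledColumns_surjective hc hσ)
    (by simpa [two_mul] using hm)] with A hA
  rw [show 2 * k = Fintype.card (Fin k ⊕ Fin k) by simp [two_mul]]
  have hcols : scaledColumns c σ A = Matrix.col (Matrix.of fun i j => Sum.elim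
      (fun a => A i (I.orderEmbOfFin hI a)) (fun b => ε i * A i (J.orderEmbOfFin hJ b)) j) := by
    ext (a | b) i <;> simp [scaledColumns, Matrix.col, c, σ]
  exact Matrix.rank_eq_card_of_linearIndependent_col (hcols ▸ hA)

/-- For `m ≥ 2k` and `n ≥ 2k`, for Lebesgue-almost every real `m × n` matrix `A`:
for all disjoint index sets `I, J` of size `k` and every sign vector `ε ∈ {±1}^m`,
the `m × 2k` matrix `[A_I | diag(ε)·A_J]` has full column rank `2k`. -/
theorem disjoint_support_full_rank_ae (k m n : ℕ) (hk : 1 ≤ k)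
    (hm : 2 * k ≤ m) (hn : 2 * k ≤ n) :
    ∀ᵐ A : Fin m → Fin n → ℝ,
      ∀ (I J : Finset (Fin n)) (hI : I.card = k) (hJ : J.card = k),
        Disjoint I J →
        ∀ ε : Fin m → ℝ, (∀ i, ε i = 1 ∨ ε i = -1) →
          (Matrix.of fun (i : Fin m) (j : Fin k ⊕ Fin k) =>
            Sum.elim (fun a => A i (I.orderEmbOfFin hI a))
                     (fun b => ε i * A i (J.orderEmbOfFin hJ b)) j).rank = 2 * k :=
  disjoint_support_full_rank_ae_general k m n hm
end

section
/- Let k ≥ 1, m, n be natural numbers with m ≥ 2k and n ≥ 2k. For Lebesgue-almost every matrix A ∈ ℝ^{m×n} the following holds: for all vectors x, z ∈ ℝ^n, each with at most k nonzero entries, whose supports are disjoint, if |Ax| = |Az| entrywise then x = 0 and z = 0. That is, two sparse vectors with non-overlapping supports can map to the same phaseless measurements only if both are zero. -/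
/-!
Pick in each row `i` a sign `τ i` with `(A x) i + τ i * (A z) i = 0`, and multiply the entries of
`A` in row `i` and in the columns of `supp z` by `τ i`. Because the supports are disjoint, the
resulting matrix `B` satisfies `B (x + z) = 0`, so the phaseless equations become linear. As
`x + z` is supported on at most `2k` columns, it lies in the kernel of a `2k × 2k` submatrix of `B`.
Such a signed minor is the determinant of a surjective linear image of `A`, hence nonzero off the
zero set of a nonzero polynomial, which is Lebesgue-null. There are finitely many sign patterns
and column choices, so for almost every `A` all these minors are nonzero, forcing `x + z = 0`.
-/

open MeasureTheory
open scoped Matrix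

namespace MvPolynomial

theorem ae_eval_ne_zero_of_fin {d : ℕ} {p : MvPolynomial (Fin d) ℝ} (hp : p ≠ 0) :
    ∀ᵐ x : Fin d → ℝ, eval x p ≠ 0 := by
  induction d with
  | zero =>
    obtain ⟨a, rfl⟩ := C_surjective (Fin 0) p
    exact Filter.Eventually.of_forall fun x => by simpa using hp
  | succ d ih =>
    set P := finSuccEquiv ℝ d p
    have hP : P.leadingCoeff ≠ 0 := by simpa [P] using hp
    -- Off the null set where the leading coefficient vanishes, `y ↦ eval (Fin.cons y s) p`
    -- is a nonzero univariate polynomial, with finitely many roots.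
    have hsection : ∀ᵐ s : Fin d → ℝ, ∀ᵐ y : ℝ, eval (Fin.cons y s) p ≠ 0 := by
      filter_upwards [ih hP] with s hs
      have hmap : P.map (eval s) ≠ 0 := fun h => hs (by
        simpa [Polynomial.coeff_map] using congrArg (Polynomial.coeff · P.natDegree) h)
      rw [ae_iff]
      refine Set.Finite.measure_zero ?_ _
      simpa [eval_eq_eval_mv_eval'] using Polynomial.finite_setOfPred_isRoot hmap
    have hmeas : MeasurableSet {q : ℝ × (Fin d → ℝ) | eval (Fin.cons q.1 q.2) p ≠ 0} :=
      (isOpen_ne_fun (continuous_eval p |>.comp (by fun_prop)) continuous_const).measurableSet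
    have hprod := (Measure.ae_prod_iff_ae_ae hmeas).2 ((Measure.ae_ae_comm hmeas).2 hsection)
    filter_upwards [(volume_preserving_piFinSuccAbove (fun _ => ℝ) 0).quasiMeasurePreserving.ae
      hprod] with x hx
    simpa using hx

theorem ae_eval_comp_linearMap_ne_zero {E : Type*} [NormedAddCommGroup E] [NormedSpace ℝ E]
    [MeasurableSpace E] [BorelSpace E] [FiniteDimensional ℝ E] (μ : Measure E)
    [μ.IsAddHaarMeasure] {σ : Type*} [Fintype σ] {p : MvPolynomial σ ℝ} (hp : p ≠ 0)
    (L : E →ₗ[ℝ] σ → ℝ) (hL : Function.Surjective L) :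
    ∀ᵐ x ∂μ, eval (L x) p ≠ 0 := by
  set e := Fintype.equivFin σ
  have hq : rename e p ≠ 0 := (rename_injective e e.injective).ne_iff' (map_zero _) |>.2 hp
  let L' : E →ₗ[ℝ] Fin (Fintype.card σ) → ℝ :=
    (LinearEquiv.funCongrLeft ℝ ℝ e.symm).toLinearMap ∘ₗ L
  have hL' : Function.Surjective L' :=
    (LinearEquiv.surjective (LinearEquiv.funCongrLeft ℝ ℝ e.symm)).comp hL
  have hmeas : MeasurableSet {y : Fin (Fintype.card σ) → ℝ | eval y (rename e p) ≠ 0} :=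
    (isOpen_ne_fun (continuous_eval _) continuous_const).measurableSet
  filter_upwards [(ae_comp_linearMap_mem_iff L' μ volume hL' hmeas).2 (ae_eval_ne_zero_of_fin hq)]
    with x hx
  simpa [L', eval_rename, Function.comp_def] using hx

end MvPolynomial

namespace Matrix

theorem ae_det_submatrix_hadamard_ne_zero {μ ν ι : Type*} [Fintype μ] [Fintype ν] [Fintype ι]
    [DecidableEq ι] (ε : Matrix μ ν ℝ) (hε : ∀ i j, ε i j ≠ 0) (r : ι ↪ μ) (c : ι ↪ ν) :
    ∀ᵐ A : μ → ν → ℝ, ((ε ⊙ of A).submatrix r c).det ≠ 0 := by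
  let L : (μ → ν → ℝ) →ₗ[ℝ] ι × ι → ℝ :=
    { toFun A p := ε (r p.1) (c p.2) * A (r p.1) (c p.2)
      map_add' A B := by ext; simp [mul_add]
      map_smul' a A := by ext; simp [mul_left_comm] }
  have hL : Function.Surjective L := fun y => by
    refine ⟨Function.extend r (fun i => Function.extend c
      (fun j => y (i, j) / ε (r i) (c j)) 0) 0, funext fun p => ?_⟩
    simp [L, r.injective.extend_apply, c.injective.extend_apply, mul_div_cancel₀ _ (hε _ _)]
  filter_upwards [MvPolynomial.ae_eval_comp_linearMap_ne_zero volume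
    (det_mvPolynomialX_ne_zero ι ℝ) L hL] with A hA
  rwa [eval_det_mvPolynomialX] at hA

theorem eq_zero_of_mulVec_eq_zero_of_det_submatrix_ne_zero {K μ ν ι : Type*} [Field K]
    [Fintype ν] [Fintype ι] [DecidableEq ι] {B : Matrix μ ν K} {u : ν → K} (hBu : B *ᵥ u = 0)
    (r : ι → μ) (c : ι ↪ ν) (hu : Function.support u ⊆ Set.range c)
    (hdet : (B.submatrix r c).det ≠ 0) : u = 0 := by
  have hvanish : ∀ l ∉ Set.range c, u l = 0 := fun l hl =>
    Function.notMem_support.1 fun h => hl (hu h)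
  have hsub : B.submatrix r c *ᵥ (u ∘ c) = 0 := funext fun i =>
    (Fintype.sum_of_injective c c.injective _ _ (fun l hl => by simp [hvanish l hl])
      fun j => rfl).trans (congrFun hBu (r i))
  have huc := eq_zero_of_mulVec_eq_zero hdet hsub
  funext l
  by_cases hl : l ∈ Set.range c
  · obtain ⟨j, rfl⟩ := hl
    exact congrFun huc j
  · exact hvanish l hl

theorem exists_hadamard_sign_mulVec_add_eq_zero {K μ ν : Type*} [Field K] [LinearOrder K]
    [IsStrictOrderedRing K] [Fintype ν] (A : Matrix μ ν K) {x z : ν → K}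
    (hxz : Disjoint (Function.support x) (Function.support z))
    (habs : ∀ i, |(A *ᵥ x) i| = |(A *ᵥ z) i|) :
    ∃ ε : μ → ν → ℤˣ, (of (fun i j => ((ε i j : ℤ) : K)) ⊙ A) *ᵥ (x + z) = 0 := by
  classical
  let τ : μ → ℤˣ := fun i => if (A *ᵥ x) i = (A *ᵥ z) i then -1 else 1
  have hτ : ∀ i, (A *ᵥ x) i + (τ i : K) * (A *ᵥ z) i = 0 := fun i => by
    by_cases h : (A *ᵥ x) i = (A *ᵥ z) i
    · simp [τ, h]
    · simp only [τ, if_neg h, Units.val_one, Int.cast_one, one_mul]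
      linear_combination (abs_eq_abs.1 (habs i)).resolve_left h
  refine ⟨fun i j => if z j = 0 then 1 else τ i, funext fun i => ?_⟩
  have hx : ∀ j, ((if z j = 0 then 1 else τ i : ℤˣ) : K) * x j = x j := fun j => by
    by_cases hzj : z j = 0
    · simp [hzj]
    · simp [hzj, Function.notMem_support.1 (Set.disjoint_right.1 hxz hzj)]
  have hz : ∀ j, ((if z j = 0 then 1 else τ i : ℤˣ) : K) * z j = τ i * z j := fun j => by
    by_cases hzj : z j = 0 <;> simp [hzj]
  calc ∑ j, (((if z j = 0 then 1 else τ i : ℤˣ) : K) * A i j) * (x j + z j)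
      = (A *ᵥ x) i + (τ i : K) * (A *ᵥ z) i := by
        simp only [mulVec, dotProduct, Finset.mul_sum, ← Finset.sum_add_distrib]
        refine Finset.sum_congr rfl fun j _ => ?_
        linear_combination A i j * (hx j + hz j)
    _ = 0 := hτ i

end Matrix

theorem Set.exists_fin_embedding_subset_range {ν : Type*} [Fintype ν] {s : Set ν} {d : ℕ}
    (hs : s.ncard ≤ d) (hd : d ≤ Fintype.card ν) : ∃ c : Fin d ↪ ν, s ⊆ Set.range c := by
  classical
  obtain ⟨G, hsG, -, hG⟩ := Finset.exists_subsuperset_card_eq (n := d)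
    (Finset.subset_univ s.toFinset) (by rwa [← Set.ncard_eq_toFinset_card']) (by simpa using hd)
  refine ⟨(G.equivFinOfCardEq hG).symm.toEmbedding.trans (Function.Embedding.subtype _),
    fun l hl => ⟨G.equivFinOfCardEq hG ⟨l, hsG (by simpa using hl)⟩, by simp⟩⟩

theorem Function.add_eq_zero_iff_of_disjoint_support {ν M : Type*} [AddZeroClass M]
    {x z : ν → M} (hxz : Disjoint (support x) (support z)) : x + z = 0 ↔ x = 0 ∧ z = 0 := by
  refine ⟨fun h => ?_, fun h => by simp [h.1, h.2]⟩
  have hpoint : ∀ l, x l = 0 ∧ z l = 0 := fun l => by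
    have hsum : x l + z l = 0 := congrFun h l
    by_cases hzl : z l = 0
    · exact ⟨by simpa [hzl] using hsum, hzl⟩
    · have hxl : x l = 0 := notMem_support.1 (Set.disjoint_right.1 hxz hzl)
      exact ⟨hxl, by simpa [hxl] using hsum⟩
  exact ⟨funext fun l => (hpoint l).1, funext fun l => (hpoint l).2⟩

theorem disjoint_support_sparse_phase_retrieval_ae_general (k m n : ℕ)
    (hm : 2 * k ≤ m) (hn : 2 * k ≤ n) :
    ∀ᵐ A : Fin m → Fin n → ℝ, ∀ x z : Fin n → ℝ,
      (Function.support x).ncard ≤ k →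
      (Function.support z).ncard ≤ k →
      Disjoint (Function.support x) (Function.support z) →
      (∀ i, |(Matrix.of A).mulVec x i| = |(Matrix.of A).mulVec z i|) →
      x = 0 ∧ z = 0 := by
  have hgeneric : ∀ᵐ A : Fin m → Fin n → ℝ,
      ∀ (ε : Fin m → Fin n → ℤˣ) (c : Fin (2 * k) ↪ Fin n),
        ((Matrix.of (fun i j => ((ε i j : ℤ) : ℝ)) ⊙ Matrix.of A).submatrix
          (Fin.castLEEmb hm) c).det ≠ 0 := by
    simp only [ae_all_iff]
    exact fun ε c => Matrix.ae_det_submatrix_hadamard_ne_zero _ (fun i j => by simp) _ c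
  filter_upwards [hgeneric] with A hA x z hx hz hxz habs
  obtain ⟨ε, hε⟩ := Matrix.exists_hadamard_sign_mulVec_add_eq_zero (Matrix.of A) hxz habs
  have hsupp : (Function.support (x + z)).ncard ≤ 2 * k :=
    calc (Function.support (x + z)).ncard
        ≤ (Function.support x ∪ Function.support z).ncard :=
          Set.ncard_le_ncard (Function.support_add x z) (Set.toFinite _)
      _ ≤ 2 * k := (Set.ncard_union_le _ _).trans (by omega)
  obtain ⟨c, hc⟩ := Set.exists_fin_embedding_subset_range hsupp (by simpa using hn)
  exact (Function.add_eq_zero_iff_of_disjoint_support hxz).1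
    (Matrix.eq_zero_of_mulVec_eq_zero_of_det_submatrix_ne_zero hε _ c hc (hA ε c))

/-- For `m ≥ 2k` and `n ≥ 2k`, for Lebesgue-almost every real `m × n` matrix `A`:
two `k`-sparse vectors with disjoint supports and the same phaseless measurements
`|Ax| = |Az|` must both be zero. -/
theorem disjoint_support_sparse_phase_retrieval_ae (k m n : ℕ) (hk : 1 ≤ k)
    (hm : 2 * k ≤ m) (hn : 2 * k ≤ n) :
    ∀ᵐ A : Fin m → Fin n → ℝ, ∀ x z : Fin n → ℝ,
      (Function.support x).ncard ≤ k →
      (Function.support z).ncard ≤ k →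
      Disjoint (Function.support x) (Function.support z) →
      (∀ i, |(Matrix.of A).mulVec x i| = |(Matrix.of A).mulVec z i|) →
      x = 0 ∧ z = 0 :=
  disjoint_support_sparse_phase_retrieval_ae_general k m n hm hn
end

section
/- Let k ≥ 1, m, n be natural numbers with n ≥ k. For Lebesgue-almost every matrix A ∈ ℝ^{m×n} the following holds: for every index set I ⊆ {1, …, n} with |I| = k and every sign vector ε ∈ {-1, +1}^m having at least k coordinates equal to +1 and at least k coordinates equal to -1, the m×2k matrix M = [A_I | diag(ε)·A_I] (first k columns the columns of A indexed by I, last k columns the corresponding columns of diag(ε)·A) has trivial null space; i.e., if A_I u + diag(ε)·A_I v = 0 for u, v ∈ ℝ^k then u = 0 and v = 0. -/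
open MeasureTheory

/-- The zero set of a nonzero multivariate polynomial over `ℝ` is Lebesgue-null. -/
lemma mv_zero_set_null : ∀ (N : ℕ) (p : MvPolynomial (Fin N) ℝ), p ≠ 0 →
    volume {x : Fin N → ℝ | MvPolynomial.eval x p = 0} = 0 := by
  intro N
  induction N with
  | zero =>
    intro p hp
    obtain ⟨c, rfl⟩ := MvPolynomial.C_surjective (Fin 0) p
    have hc : c ≠ 0 := by rintro rfl; simp at hp
    have h0 : {x : Fin 0 → ℝ | MvPolynomial.eval x (MvPolynomial.C c) = 0} = ∅ := by
      ext x; simp [hc]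
    rw [h0]; exact measure_empty
  | succ N ih =>
    intro p hp
    set q : Polynomial (MvPolynomial (Fin N) ℝ) := MvPolynomial.finSuccEquiv ℝ N p with hqdef
    have hq0 : q ≠ 0 := by
      intro h
      apply hp
      have := congrArg (MvPolynomial.finSuccEquiv ℝ N).symm (hqdef.symm.trans h)
      simpa using this
    set S : Set (Fin (N + 1) → ℝ) := {x | MvPolynomial.eval x p = 0} with hS
    have hSmeas : MeasurableSet S :=
      (isClosed_eq (MvPolynomial.continuous_eval p) continuous_const).measurableSet
    set E := MeasurableEquiv.piFinSuccAbove (fun _ : Fin (N + 1) => ℝ) 0 with hE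
    have hEmp : MeasurePreserving E volume volume :=
      volume_preserving_piFinSuccAbove (fun _ : Fin (N + 1) => ℝ) 0
    have key : volume (E.symm ⁻¹' S) = volume S :=
      (hEmp.symm E).measure_preimage hSmeas.nullMeasurableSet
    rw [← key]
    set T : Set (ℝ × (Fin N → ℝ)) :=
      {z | Polynomial.eval z.1 (q.map (MvPolynomial.eval z.2)) = 0} with hT
    have hpre : E.symm ⁻¹' S = T := by
      ext z
      have hz : E.symm z = Fin.cons z.1 z.2 := by
        simp [hE, MeasurableEquiv.piFinSuccAbove, Fin.insertNthEquiv]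
      simp only [Set.mem_preimage, hS, Set.mem_setOf_eq, hz, hT]
      rw [MvPolynomial.eval_eq_eval_mv_eval']
    rw [hpre]
    have hTmeas : MeasurableSet T := by
      rw [← hpre]; exact E.symm.measurable hSmeas
    have hswap : volume T = ((volume : Measure (Fin N → ℝ)).prod (volume : Measure ℝ))
        (Prod.swap ⁻¹' T) := by
      rw [Measure.volume_eq_prod]
      exact (Measure.measurePreserving_swap.measure_preimage hTmeas.nullMeasurableSet).symm
    rw [hswap, Measure.measure_prod_null (measurable_swap hTmeas)]
    -- for a.e. y, the one-variable polynomial `q.map (eval y)` is nonzero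
    have hc0 : q.leadingCoeff ≠ 0 := Polynomial.leadingCoeff_ne_zero.mpr hq0
    have hae : ∀ᵐ y : Fin N → ℝ, MvPolynomial.eval y q.leadingCoeff ≠ 0 := by
      rw [ae_iff]
      simpa using ih q.leadingCoeff hc0
    filter_upwards [hae] with y hy
    have hqy : q.map (MvPolynomial.eval y) ≠ 0 := by
      intro h
      apply hy
      have hcoeff : (q.map (MvPolynomial.eval y)).coeff q.natDegree
          = MvPolynomial.eval y q.leadingCoeff := Polynomial.coeff_map _ _
      rw [h] at hcoeff
      simpa using hcoeff.symm
    have hset : Prod.mk y ⁻¹' (Prod.swap ⁻¹' T)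
        = {a : ℝ | (q.map (MvPolynomial.eval y)).IsRoot a} := by
      ext a
      simp [hT, Polynomial.IsRoot]
    simp only [Pi.zero_apply]
    rw [hset]
    exact (Polynomial.finite_setOf_isRoot hqy).measure_zero _

/-- Uncurrying a random matrix (as a function of two indices) into a vector indexed by
`Fin (m * n)` is measure preserving. -/
lemma measurePreserving_uncurryFin (m n : ℕ) :
    MeasurePreserving
      (fun (A : Fin m → Fin n → ℝ) (t : Fin (m * n)) =>
        A (finProdFinEquiv.symm t).1 (finProdFinEquiv.symm t).2)
      volume volume := by
  have hmeas : Measurable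
      (fun (A : Fin m → Fin n → ℝ) (t : Fin (m * n)) =>
        A (finProdFinEquiv.symm t).1 (finProdFinEquiv.symm t).2) :=
    measurable_pi_lambda _ fun t =>
      (measurable_pi_apply _).comp (measurable_pi_apply _)
  refine ⟨hmeas, ?_⟩
  rw [show (volume : Measure (Fin (m * n) → ℝ)) = Measure.pi fun _ => volume from volume_pi]
  refine (Measure.pi_eq fun s hs => ?_).symm
  rw [Measure.map_apply hmeas (MeasurableSet.univ_pi hs)]
  have hpre : (fun (A : Fin m → Fin n → ℝ) (t : Fin (m * n)) =>
        A (finProdFinEquiv.symm t).1 (finProdFinEquiv.symm t).2) ⁻¹' Set.univ.pi s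
      = Set.univ.pi fun i : Fin m => Set.univ.pi fun j : Fin n =>
          s (finProdFinEquiv (i, j)) := by
    ext A
    simp only [Set.mem_preimage, Set.mem_pi, Set.mem_univ, true_implies]
    constructor
    · intro h i j
      have := h (finProdFinEquiv (i, j))
      rwa [Equiv.symm_apply_apply] at this
    · intro h t
      have := h (finProdFinEquiv.symm t).1 (finProdFinEquiv.symm t).2
      rwa [Prod.mk.eta, Equiv.apply_symm_apply] at this
  rw [hpre, volume_pi_pi]
  have hrow : ∀ i : Fin m,
      (volume : Measure (Fin n → ℝ))
        (Set.univ.pi fun j : Fin n => s (finProdFinEquiv (i, j)))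
      = ∏ j : Fin n, volume (s (finProdFinEquiv (i, j))) := fun i => volume_pi_pi _
  simp_rw [hrow]
  rw [← Fintype.prod_prod_type (fun q : Fin m × Fin n => volume (s (finProdFinEquiv q)))]
  exact Equiv.prod_comp finProdFinEquiv fun t => volume (s t)

/-- The generic determinant polynomial of a `k × k` submatrix with injective row and column
selections is a nonzero polynomial. -/
lemma detPoly_ne_zero {k m n : ℕ} {r : Fin k → Fin m} {c : Fin k → Fin n}
    (hr : Function.Injective r) (hc : Function.Injective c) :
    Matrix.det (Matrix.of fun a b : Fin k =>
      (MvPolynomial.X (finProdFinEquiv (r a, c b)) : MvPolynomial (Fin (m * n)) ℝ)) ≠ 0 := by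
  intro h
  classical
  set x₀ : Fin (m * n) → ℝ := fun t =>
    if ∃ a : Fin k, finProdFinEquiv (r a, c a) = t then 1 else 0 with hx₀
  have := congrArg (MvPolynomial.eval x₀) h
  rw [map_zero, RingHom.map_det, RingHom.mapMatrix_apply] at this
  have hone : (Matrix.of fun a b : Fin k =>
      (MvPolynomial.X (finProdFinEquiv (r a, c b)) : MvPolynomial (Fin (m * n)) ℝ)).map
        (MvPolynomial.eval x₀) = 1 := by
    ext a b
    simp only [Matrix.map_apply, Matrix.of_apply, MvPolynomial.eval_X, Matrix.one_apply, hx₀]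
    by_cases hab : a = b
    · subst hab
      rw [if_pos (⟨a, rfl⟩ : ∃ a', finProdFinEquiv (r a', c a') = finProdFinEquiv (r a, c a)),
        if_pos rfl]
    · rw [if_neg hab, if_neg]
      rintro ⟨a', ha'⟩
      have ha' : (r a', c a') = (r a, c b) := finProdFinEquiv.injective ha'
      have h1 : r a' = r a := congrArg Prod.fst ha'
      have h2 : c a' = c b := congrArg Prod.snd ha'
      exact hab (hc ((hr h1) ▸ h2))
  rw [hone, Matrix.det_one] at this
  exact one_ne_zero this

/-- Almost every matrix has all its `k × k` minors (with injective row/column selections)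
nonzero. -/
lemma ae_det_ne (k m n : ℕ) :
    ∀ᵐ A : Fin m → Fin n → ℝ, ∀ (r : Fin k → Fin m) (c : Fin k → Fin n),
      Function.Injective r → Function.Injective c →
      Matrix.det (Matrix.of fun a b : Fin k => A (r a) (c b)) ≠ 0 := by
  rw [ae_all_iff]
  intro r
  rw [ae_all_iff]
  intro c
  by_cases hr : Function.Injective r
  · by_cases hc : Function.Injective c
    · have hp := detPoly_ne_zero hr hc
      have h0 := mv_zero_set_null (m * n) _ hp
      have haepoly : ∀ᵐ x : Fin (m * n) → ℝ,
          MvPolynomial.eval x (Matrix.det (Matrix.of fun a b : Fin k =>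
            (MvPolynomial.X (finProdFinEquiv (r a, c b)) : MvPolynomial (Fin (m * n)) ℝ))) ≠ 0 := by
        rw [ae_iff]
        simpa using h0
      have hmp := measurePreserving_uncurryFin m n
      have haeA : ∀ᵐ A : Fin m → Fin n → ℝ,
          MvPolynomial.eval (fun t : Fin (m * n) =>
              A (finProdFinEquiv.symm t).1 (finProdFinEquiv.symm t).2)
            (Matrix.det (Matrix.of fun a b : Fin k =>
              (MvPolynomial.X (finProdFinEquiv (r a, c b)) : MvPolynomial (Fin (m * n)) ℝ))) ≠ 0 := by
        rw [ae_iff]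
        have hmeas : MeasurableSet {x : Fin (m * n) → ℝ |
            MvPolynomial.eval x (Matrix.det (Matrix.of fun a b : Fin k =>
              (MvPolynomial.X (finProdFinEquiv (r a, c b)) : MvPolynomial (Fin (m * n)) ℝ))) = 0} :=
          (isClosed_eq (MvPolynomial.continuous_eval _) continuous_const).measurableSet
        have := hmp.measure_preimage hmeas.nullMeasurableSet
        rw [h0] at this
        convert this using 2
        ext A
        simp
      filter_upwards [haeA] with A hA
      intro _ _
      intro hdet
      apply hA
      rw [RingHom.map_det, RingHom.mapMatrix_apply]
      have hmapeq : (Matrix.of fun a b : Fin k =>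
          (MvPolynomial.X (finProdFinEquiv (r a, c b)) : MvPolynomial (Fin (m * n)) ℝ)).map
            (MvPolynomial.eval fun t : Fin (m * n) =>
              A (finProdFinEquiv.symm t).1 (finProdFinEquiv.symm t).2)
          = Matrix.of fun a b : Fin k => A (r a) (c b) := by
        ext a b
        simp only [Matrix.map_apply, Matrix.of_apply, MvPolynomial.eval_X,
          Equiv.symm_apply_apply]
      rw [hmapeq, hdet]
    · filter_upwards with A _ hc'
      exact absurd hc' hc
  · filter_upwards with A hr'
    exact absurd hr' hr

/-- For `k ≥ 1` and `n ≥ k`, for Lebesgue-almost every real `m × n` matrix `A`: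
for every index set `I` of size `k` and every sign vector `ε ∈ {±1}^m` with at least
`k` coordinates equal to `+1` and at least `k` coordinates equal to `-1`, the matrix
`[A_I | diag(ε)·A_I]` has trivial null space: `A_I u + diag(ε)·A_I v = 0` forces
`u = 0` and `v = 0`. -/
theorem full_support_overlap_trivial_nullspace_ae (k m n : ℕ) (hk : 1 ≤ k)
    (hn : k ≤ n) :
    ∀ᵐ A : Fin m → Fin n → ℝ,
      ∀ (I : Finset (Fin n)) (hI : I.card = k),
        ∀ ε : Fin m → ℝ, (∀ i, ε i = 1 ∨ ε i = -1) →
          k ≤ (Finset.univ.filter fun i => ε i = 1).card →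
          k ≤ (Finset.univ.filter fun i => ε i = -1).card →
          ∀ u v : Fin k → ℝ,
            (∀ i, (∑ a, A i (I.orderEmbOfFin hI a) * u a)
                + ε i * (∑ a, A i (I.orderEmbOfFin hI a) * v a) = 0) →
            u = 0 ∧ v = 0 := by
  filter_upwards [ae_det_ne k m n] with A hA
  intro I hI ε hε h1 h2 u v heq
  classical
  obtain ⟨J1, hJ1sub, hJ1card⟩ := Finset.exists_subset_card_eq h1
  obtain ⟨J2, hJ2sub, hJ2card⟩ := Finset.exists_subset_card_eq h2
  set c := fun a : Fin k => I.orderEmbOfFin hI a with hcdef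
  set r1 := fun a : Fin k => J1.orderEmbOfFin hJ1card a with hr1def
  set r2 := fun a : Fin k => J2.orderEmbOfFin hJ2card a with hr2def
  have hcinj : Function.Injective c := (I.orderEmbOfFin hI).injective
  have hr1inj : Function.Injective r1 := (J1.orderEmbOfFin hJ1card).injective
  have hr2inj : Function.Injective r2 := (J2.orderEmbOfFin hJ2card).injective
  have hdet1 := hA r1 c hr1inj hcinj
  have hdet2 := hA r2 c hr2inj hcinj
  -- rows in J1 satisfy ε = 1
  have hε1 : ∀ b : Fin k, ε (r1 b) = 1 := by
    intro b
    have hmem : r1 b ∈ J1 := Finset.orderEmbOfFin_mem J1 hJ1card b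
    have := hJ1sub hmem
    simpa using (Finset.mem_filter.mp this).2
  have hε2 : ∀ b : Fin k, ε (r2 b) = -1 := by
    intro b
    have hmem : r2 b ∈ J2 := Finset.orderEmbOfFin_mem J2 hJ2card b
    have := hJ2sub hmem
    simpa using (Finset.mem_filter.mp this).2
  -- u + v = 0
  have huv1 : u + v = 0 := by
    apply Matrix.eq_zero_of_mulVec_eq_zero hdet1
    funext b
    have heqb := heq (r1 b)
    rw [hε1 b, one_mul] at heqb
    have : (Matrix.of fun a b : Fin k => A (r1 a) (c b)).mulVec (u + v) b
        = (∑ a, A (r1 b) (c a) * u a) + ∑ a, A (r1 b) (c a) * v a := by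
      simp [Matrix.mulVec, dotProduct, mul_add, Finset.sum_add_distrib]
    rw [Pi.zero_apply, this, heqb]
  -- u - v = 0
  have huv2 : u - v = 0 := by
    apply Matrix.eq_zero_of_mulVec_eq_zero hdet2
    funext b
    have heqb := heq (r2 b)
    rw [hε2 b] at heqb
    have : (Matrix.of fun a b : Fin k => A (r2 a) (c b)).mulVec (u - v) b
        = (∑ a, A (r2 b) (c a) * u a) - ∑ a, A (r2 b) (c a) * v a := by
      simp [Matrix.mulVec, dotProduct, mul_sub, Finset.sum_sub_distrib]
    rw [Pi.zero_apply, this]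
    have := heqb
    linarith [heqb]
  constructor
  · funext a
    have e1 := congrFun huv1 a
    have e2 := congrFun huv2 a
    simp only [Pi.add_apply, Pi.sub_apply, Pi.zero_apply] at e1 e2 ⊢
    linarith
  · funext a
    have e1 := congrFun huv1 a
    have e2 := congrFun huv2 a
    simp only [Pi.add_apply, Pi.sub_apply, Pi.zero_apply] at e1 e2 ⊢
    linarith
end

section
/- Let k ≥ 1, m, n be natural numbers with m ≥ 2k - 1 and n ≥ k. For Lebesgue-almost every matrix A ∈ ℝ^{m×n} the following holds: for all vectors x, z ∈ ℝ^n, each with at most k nonzero entries, having the SAME support, if |Ax| = |Az| entrywise then z = x or z = -x. That is, m ≥ 2k - 1 measurements suffice to rule out two essentially distinct sparse vectors with fully overlapping supports mapping to the same phaseless measurements. -/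
/-!
For a.e. `A` every square minor is nonzero: `det (M + t • 1)` is a monic polynomial in `t`, so
disintegrating Lebesgue measure along the lines `M + ℝ • 1` shows that singular square matrices
form a null set, and each minor is a surjective linear image of `A`.
If `|Ax| = |Az|`, every row of `A` annihilates `x - z` or `x + z`, so with `m ≥ 2k - 1` rows one of
the two is annihilated by `k` rows. Both vectors live on the common support of size `≤ k`, where a
nonsingular `k × k` minor forces that vector to vanish.
-/

open MeasureTheory Matrix

def Matrix.TotallyNonsingular {α β R : Type*} [CommRing R] (A : Matrix α β R) : Prop :=
  ∀ (t : ℕ) (g : Fin t ↪ α) (f : Fin t ↪ β), (A.submatrix g f).det ≠ 0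

section Genericity

variable {ι : Type*} [Fintype ι] [DecidableEq ι]

theorem measurableSet_det_ne_zero :
    MeasurableSet {M : ι → ι → ℝ | (Matrix.of M).det ≠ 0} := by
  have hdet : Continuous fun M : ι → ι → ℝ => (Matrix.of M).det :=
    Continuous.matrix_det continuous_id
  exact (isOpen_ne_fun hdet continuous_const).measurableSet

theorem ae_det_ne_zero : ∀ᵐ M : ι → ι → ℝ, (Matrix.of M).det ≠ 0 := by
  refine (ae_ae_add_linearMap_mem_iff (LinearMap.toSpanSingleton ℝ _ (Matrix.of.symm 1))
    (volume : Measure ℝ) volume measurableSet_det_ne_zero).1 (.of_forall fun M => ?_)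
  have hroots : {t : ℝ | (-Matrix.of M).charpoly.IsRoot t}.Finite :=
    Polynomial.finite_setOfPred_isRoot (Matrix.charpoly_monic _).ne_zero
  refine measure_mono_null (fun t ht => ?_) (hroots.measure_zero volume)
  have hsing : (Matrix.of (M + t • Matrix.of.symm 1)).det = 0 := not_not.1 ht
  rw [Set.mem_ofPred_eq, Polynomial.IsRoot, Matrix.eval_charpoly, ← hsing]
  congr 1
  ext i j
  simp [one_apply, diagonal_apply, add_comm]

theorem ae_det_submatrix_ne_zero {α β : Type*} [Fintype α] [Fintype β] (g : ι ↪ α)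
    (f : ι ↪ β) : ∀ᵐ A : α → β → ℝ, ((Matrix.of A).submatrix g f).det ≠ 0 := by
  let L : (α → β → ℝ) →ₗ[ℝ] (ι → ι → ℝ) :=
    { toFun A i j := A (g i) (f j), map_add' _ _ := rfl, map_smul' _ _ := rfl }
  have hL : Function.Surjective L := fun M =>
    ⟨Function.extend g (fun i => Function.extend f (M i) 0) 0, by
      ext i j
      simp [L, g.injective.extend_apply, f.injective.extend_apply]⟩
  exact (ae_comp_linearMap_mem_iff L volume volume hL measurableSet_det_ne_zero).2 ae_det_ne_zero

end Genericity

theorem ae_totallyNonsingular (α β : Type*) [Fintype α] [Fintype β] :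
    ∀ᵐ A : α → β → ℝ, (Matrix.of A).TotallyNonsingular := by
  simp only [Matrix.TotallyNonsingular, ae_all_iff]
  exact fun _ g f => ae_det_submatrix_ne_zero g f

theorem Matrix.submatrix_mulVec_comp_of_support_subset {α β ι R : Type*} [Fintype β]
    [Fintype ι] [CommSemiring R] (A : Matrix α β R) (g : ι → α) (f : ι ↪ β) {u : β → R}
    (hu : Function.support u ⊆ Set.range f) :
    A.submatrix g f *ᵥ (u ∘ f) = (A *ᵥ u) ∘ g := by
  ext i
  refine Fintype.sum_of_injective f f.injective _ _ (fun j hj => ?_) (fun _ => rfl)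
  simp [Function.notMem_support.1 (fun h => hj (hu h))]

theorem Matrix.TotallyNonsingular.eq_zero_of_mulVec_eq_zero_on {α β K : Type*} [Fintype β]
    [Field K] {A : Matrix α β K} (hA : A.TotallyNonsingular) {u : β → K} {S : Finset α}
    {T : Finset β} (hu : Function.support u ⊆ T) (hTS : T.card ≤ S.card)
    (hS : ∀ i ∈ S, (A *ᵥ u) i = 0) : u = 0 := by
  obtain ⟨S', hS'S, hcard⟩ := Finset.exists_subset_card_eq hTS
  let f : Fin T.card ↪ β := T.equivFin.symm.toEmbedding.trans (Function.Embedding.subtype _)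
  let g : Fin T.card ↪ α :=
    (S'.equivFinOfCardEq hcard).symm.toEmbedding.trans (Function.Embedding.subtype _)
  have hf : Function.support u ⊆ Set.range f := fun j hj =>
    ⟨T.equivFin ⟨j, hu hj⟩, by simp [f]⟩
  have hker : A.submatrix g f *ᵥ (u ∘ f) = 0 := by
    rw [A.submatrix_mulVec_comp_of_support_subset g f hf]
    ext i
    exact hS _ (hS'S (Subtype.prop _))
  have huf := Matrix.eq_zero_of_mulVec_eq_zero (hA _ g f) hker
  ext j
  by_contra hj
  obtain ⟨i, rfl⟩ := hf hj
  exact hj (congrFun huf i)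

theorem Matrix.TotallyNonsingular.eq_or_eq_neg_of_abs_mulVec_eq {α β K : Type*} [Fintype α]
    [Fintype β] [Field K] [LinearOrder K] [IsStrictOrderedRing K] {A : Matrix α β K}
    (hA : A.TotallyNonsingular) {x z : β → K} {T : Finset β} (hx : Function.support x ⊆ T)
    (hz : Function.support z ⊆ T) (hT : 2 * T.card - 1 ≤ Fintype.card α)
    (habs : ∀ i, |(A *ᵥ x) i| = |(A *ᵥ z) i|) : z = x ∨ z = -x := by
  classical
  let kerSub := Finset.univ.filter fun i => (A *ᵥ (x - z)) i = 0
  let kerAdd := Finset.univ.filter fun i => (A *ᵥ (x + z)) i = 0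
  have hcover : kerSub ∪ kerAdd = Finset.univ := by
    refine Finset.eq_univ_of_forall fun i => ?_
    rcases abs_eq_abs.1 (habs i) with h | h
    · simp [kerSub, mulVec_sub, h]
    · simp [kerAdd, mulVec_add, h]
  have hlarge : T.card ≤ kerSub.card ∨ T.card ≤ kerAdd.card := by
    have := Finset.card_union_le kerSub kerAdd
    rw [hcover, Finset.card_univ] at this
    omega
  have hxz := Set.union_subset hx hz
  rcases hlarge with h | h
  · refine Or.inl (sub_eq_zero.1 ?_).symm
    exact hA.eq_zero_of_mulVec_eq_zero_on ((Function.support_sub x z).trans hxz) h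
      fun i hi => (Finset.mem_filter.1 hi).2
  · refine Or.inr (eq_neg_of_add_eq_zero_right ?_)
    exact hA.eq_zero_of_mulVec_eq_zero_on ((Function.support_add x z).trans hxz) h
      fun i hi => (Finset.mem_filter.1 hi).2

theorem full_support_overlap_sparse_phase_retrieval_ae_general (k m n : ℕ)
    (hm : 2 * k - 1 ≤ m) :
    ∀ᵐ A : Fin m → Fin n → ℝ, ∀ x z : Fin n → ℝ,
      (Function.support x).ncard ≤ k →
      (Function.support z).ncard ≤ k →
      Function.support x = Function.support z →
      (∀ i, |(Matrix.of A).mulVec x i| = |(Matrix.of A).mulVec z i|) →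
      z = x ∨ z = -x := by
  filter_upwards [ae_totallyNonsingular (Fin m) (Fin n)] with A hA x z hx _ hxz habs
  let T := (Set.toFinite (Function.support x)).toFinset
  have hT : T.card ≤ k := by rwa [← Set.ncard_eq_toFinset_card]
  refine hA.eq_or_eq_neg_of_abs_mulVec_eq (T := T) (by simp [T]) (by simp [T, hxz]) ?_ habs
  rw [Fintype.card_fin]
  omega

/-- For `k ≥ 1`, `m ≥ 2k - 1` and `n ≥ k`, for Lebesgue-almost every real `m × n`
matrix `A`: two `k`-sparse vectors with the SAME support and the same phaseless
measurements `|Ax| = |Az|` agree up to global sign. -/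
theorem full_support_overlap_sparse_phase_retrieval_ae (k m n : ℕ) (hk : 1 ≤ k)
    (hm : 2 * k - 1 ≤ m) (hn : k ≤ n) :
    ∀ᵐ A : Fin m → Fin n → ℝ, ∀ x z : Fin n → ℝ,
      (Function.support x).ncard ≤ k →
      (Function.support z).ncard ≤ k →
      Function.support x = Function.support z →
      (∀ i, |(Matrix.of A).mulVec x i| = |(Matrix.of A).mulVec z i|) →
      z = x ∨ z = -x :=
  full_support_overlap_sparse_phase_retrieval_ae_general k m n hm
end

section
/- Let A ∈ ℂ^{m×n} and let k be a natural number with 1 ≤ k ≤ m. Assume that every square submatrix of A of size at most k (obtained by selecting any s ≤ k rows and any s columns) is invertible. Then for every nonzero vector x ∈ ℂ^n with at most k nonzero entries, the vector Ax has at most k - 1 zero entries; equivalently, Ax has at least m - k + 1 nonzero entries. -/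
/-- Let `A ∈ ℂ^{m×n}` and `1 ≤ k ≤ m`. If every square submatrix of `A` of size at
most `k` is invertible (nonzero determinant), then for every nonzero `k`-sparse
vector `x`, the vector `A x` has at most `k - 1` zero entries; equivalently, at
least `m - k + 1` nonzero entries. -/
theorem sparse_measurements_mostly_nonzero (m n k : ℕ) (hk : 1 ≤ k) (hkm : k ≤ m)
    (A : Matrix (Fin m) (Fin n) ℂ)
    (hsub : ∀ (s : ℕ), s ≤ k →
      ∀ (r : Fin s → Fin m) (c : Fin s → Fin n),
        Function.Injective r → Function.Injective c →
        (A.submatrix r c).det ≠ 0) :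
    ∀ x : Fin n → ℂ, x ≠ 0 → (Function.support x).ncard ≤ k →
      ({i | A.mulVec x i = 0}).ncard ≤ k - 1 ∧
      m - k + 1 ≤ ({i | A.mulVec x i ≠ 0}).ncard := by
  classical
  intro x hx hsupp
  -- support as a Finset
  set S : Finset (Fin n) := Finset.univ.filter (fun j => x j ≠ 0) with hS
  have hSset : Function.support x = ↑S := by
    ext j; simp [hS, Function.mem_support]
  set s : ℕ := S.card with hscard
  have hsk : s ≤ k := by
    rwa [hSset, Set.ncard_coe_finset] at hsupp
  have hSne : S.Nonempty := by
    rcases Function.ne_iff.mp hx with ⟨j, hj⟩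
    exact ⟨j, by simpa [hS] using hj⟩
  have hs1 : 1 ≤ s := Finset.card_pos.mpr hSne
  -- zero set as a Finset
  set Z : Finset (Fin m) := Finset.univ.filter (fun i => A.mulVec x i = 0) with hZ
  have hZset : {i | A.mulVec x i = 0} = ↑Z := by
    ext i; simp [hZ]
  -- column enumeration of S
  have hcS : S.card = s := rfl
  let cI := S.orderIsoOfFin hcS
  let c : Fin s → Fin n := fun i => (cI i : Fin n)
  have hcinj : Function.Injective c := fun a b hab => by
    apply cI.injective; exact Subtype.ext hab
  have hcmem : ∀ i, c i ∈ S := fun i => (cI i).2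
  -- key claim : Z.card < s is too strong; we show Z.card < k
  have hZk : Z.card < k := by
    by_contra h
    push_neg at h
    obtain ⟨T, hTZ, hTcard⟩ := Finset.exists_subset_card_eq (le_trans hsk h)
    let rI := T.orderIsoOfFin hTcard
    let r : Fin s → Fin m := fun i => (rI i : Fin m)
    have hrinj : Function.Injective r := fun a b hab => by
      apply rI.injective; exact Subtype.ext hab
    have hdet := hsub s hsk r c hrinj hcinj
    -- the restricted vector
    let v : Fin s → ℂ := fun i => x (c i)
    have hv : (A.submatrix r c).mulVec v = 0 := by
      funext i
      have hri : A.mulVec x (r i) = 0 := by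
        have : r i ∈ Z := hTZ (rI i).2
        simpa [hZ] using this
      have hsum : A.mulVec x (r i) = ∑ j ∈ S, A (r i) j * x j := by
        rw [Matrix.mulVec, dotProduct]
        symm
        apply Finset.sum_subset (Finset.subset_univ S)
        intro j _ hjS
        have : x j = 0 := by
          by_contra hxj
          exact hjS (by simp [hS, hxj])
        simp [this]
      have hre : ∑ j ∈ S, A (r i) j * x j = ∑ p : Fin s, A (r i) (c p) * x (c p) := by
        rw [← Finset.sum_attach S (fun j => A (r i) j * x j)]
        exact (Fintype.sum_equiv cI.toEquiv _ _ (fun p => rfl)).symm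
      have : (A.submatrix r c).mulVec v i = ∑ p : Fin s, A (r i) (c p) * x (c p) := by
        simp [Matrix.mulVec, dotProduct, Matrix.submatrix, v]
      rw [this, ← hre, ← hsum, hri]
      rfl
    have hv0 : v = 0 := Matrix.eq_zero_of_mulVec_eq_zero hdet hv
    -- contradiction : some entry of S is nonzero
    obtain ⟨j, hjS⟩ := hSne
    obtain ⟨p, hp⟩ := cI.surjective ⟨j, hjS⟩
    have : x j ≠ 0 := by simpa [hS] using hjS
    apply this
    have := congrFun hv0 p
    simpa [v, c, hp] using this
  constructor
  · rw [hZset, Set.ncard_coe_finset]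
    omega
  · have hcompl : {i | A.mulVec x i ≠ 0} = ↑(Zᶜ) := by
      ext i; simp [hZ]
    rw [hcompl, Set.ncard_coe_finset, Finset.card_compl]
    simp only [Fintype.card_fin]
    omega
end
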